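/- arXiv:0903.5436 — 15 statements merged into one kernel-verified Lean document; each statement's English description precedes it below -/
import Mathlib

section
/- Let Q be a quasigroup and let R be a right zero semigroup (in the language {·, \, /}). Equip the direct product Q × R with componentwise operations ·, \, /. Then Q × R satisfies all five identities of system (A): (A1) x \ (x·y) = y; (A2) x·(x \ y) = y; (A3) (x/y)·y = (x·y)/y; (A4) ((x/y)·y)/z = x/z; (A5) ((x·y)/z)·z = x·((y/z)·z). -/
/-! Every identity of system (A) holds in each quasigroup, and in each right zero semigroup,
where both sides of every identity evaluate to their rightmost variable; identities pass to
direct products with componentwise operations. -/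

structure SatisfiesSystemA {α : Type*} (mul ld rd : α → α → α) : Prop where
  ld_mul : ∀ x y, ld x (mul x y) = y
  mul_ld : ∀ x y, mul x (ld x y) = y
  mul_rd_eq_rd_mul : ∀ x y, mul (rd x y) y = rd (mul x y) y
  rd_mul_rd : ∀ x y z, rd (mul (rd x y) y) z = rd x z
  mul_rd_mul : ∀ x y z, mul (rd (mul x y) z) z = mul x (mul (rd y z) z)

namespace SatisfiesSystemA

variable {α β : Type*}

theorem of_quasigroup {mul ld rd : α → α → α}
    (h1 : ∀ x y, ld x (mul x y) = y) (h2 : ∀ x y, mul x (ld x y) = y)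
    (h3 : ∀ x y, rd (mul x y) y = x) (h4 : ∀ x y, mul (rd x y) y = x) :
    SatisfiesSystemA mul ld rd where
  ld_mul := h1
  mul_ld := h2
  mul_rd_eq_rd_mul x y := by rw [h3, h4]
  rd_mul_rd x y z := by rw [h4]
  mul_rd_mul x y z := by rw [h4, h4]

theorem of_rightZero {mul ld rd : α → α → α}
    (hm : ∀ x y, mul x y = y) (hl : ∀ x y, ld x y = y) (hr : ∀ x y, rd x y = y) :
    SatisfiesSystemA mul ld rd where
  ld_mul _ _ := by simp only [hm, hl]
  mul_ld _ _ := by simp only [hm, hl]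
  mul_rd_eq_rd_mul _ _ := by simp only [hm, hr]
  rd_mul_rd _ _ _ := by simp only [hm, hr]
  mul_rd_mul _ _ _ := by simp only [hm, hr]

theorem prod {mA lA rA : α → α → α} {mB lB rB : β → β → β}
    (hA : SatisfiesSystemA mA lA rA) (hB : SatisfiesSystemA mB lB rB) :
    SatisfiesSystemA (fun a b : α × β => (mA a.1 b.1, mB a.2 b.2))
      (fun a b => (lA a.1 b.1, lB a.2 b.2)) (fun a b => (rA a.1 b.1, rB a.2 b.2)) where
  ld_mul x y := Prod.ext (hA.ld_mul x.1 y.1) (hB.ld_mul x.2 y.2)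
  mul_ld x y := Prod.ext (hA.mul_ld x.1 y.1) (hB.mul_ld x.2 y.2)
  mul_rd_eq_rd_mul x y := Prod.ext (hA.mul_rd_eq_rd_mul x.1 y.1) (hB.mul_rd_eq_rd_mul x.2 y.2)
  rd_mul_rd x y z := Prod.ext (hA.rd_mul_rd x.1 y.1 z.1) (hB.rd_mul_rd x.2 y.2 z.2)
  mul_rd_mul x y z := Prod.ext (hA.mul_rd_mul x.1 y.1 z.1) (hB.mul_rd_mul x.2 y.2 z.2)

end SatisfiesSystemA

/-- The direct product of a quasigroup and a right zero semigroup
(with componentwise operations) satisfies all five identities of system (A). -/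
theorem rightProduct_satisfies_systemA {Q R : Type*}
    (mQ lQ rQ : Q → Q → Q)
    (hQ1 : ∀ x y, lQ x (mQ x y) = y)
    (hQ2 : ∀ x y, mQ x (lQ x y) = y)
    (hQ3 : ∀ x y, rQ (mQ x y) y = x)
    (hQ4 : ∀ x y, mQ (rQ x y) y = x)
    (mR lR rR : R → R → R)
    (hRm : ∀ x y, mR x y = y)
    (hRl : ∀ x y, lR x y = y)
    (hRr : ∀ x y, rR x y = y)
    (mul ld rd : Q × R → Q × R → Q × R)
    (hmul : ∀ a b, mul a b = (mQ a.1 b.1, mR a.2 b.2))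
    (hld : ∀ a b, ld a b = (lQ a.1 b.1, lR a.2 b.2))
    (hrd : ∀ a b, rd a b = (rQ a.1 b.1, rR a.2 b.2)) :
    (∀ x y, ld x (mul x y) = y) ∧
    (∀ x y, mul x (ld x y) = y) ∧
    (∀ x y, mul (rd x y) y = rd (mul x y) y) ∧
    (∀ x y z, rd (mul (rd x y) y) z = rd x z) ∧
    (∀ x y z, mul (rd (mul x y) z) z = mul x (mul (rd y z) z)) := by
  obtain rfl : mul = fun a b => (mQ a.1 b.1, mR a.2 b.2) := funext₂ hmul
  obtain rfl : ld = fun a b => (lQ a.1 b.1, lR a.2 b.2) := funext₂ hld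
  obtain rfl : rd = fun a b => (rQ a.1 b.1, rR a.2 b.2) := funext₂ hrd
  have h := (SatisfiesSystemA.of_quasigroup hQ1 hQ2 hQ3 hQ4).prod
    (SatisfiesSystemA.of_rightZero hRm hRl hRr)
  exact ⟨h.ld_mul, h.mul_ld, h.mul_rd_eq_rd_mul, h.rd_mul_rd, h.mul_rd_mul⟩
end

section
/- Let (S; ·, \, /) be an algebra satisfying system (A), and define x ⋆ y := (x·y)/y. Then for all x, y, z in S: (x·y) ⋆ z = x·(y ⋆ z), (x \ y) ⋆ z = x \ (y ⋆ z), and (x/y) ⋆ z = x/(y ⋆ z). -/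
/-!
Rewrite `x ⋆ z` as `(x/z)·z` using (A3). Then (A5) says exactly `(x·y) ⋆ z = x·(y ⋆ z)`, and since
`x \ -` inverts `x · -`, the map `- ⋆ z` also commutes with `x \ -`. For division, (A4) says
`(x ⋆ y)/z = x/z`; together with (A5) this gives `(x/y)·(y ⋆ z) = x ⋆ z` and `x ⋆ (y ⋆ z) = x ⋆ z`, so
`(x/y) ⋆ z = (x/y) ⋆ (y ⋆ z) = ((x/y)·(y ⋆ z))/(y ⋆ z) = (x ⋆ z)/(y ⋆ z) = x/(y ⋆ z)`.
-/

/-- The star operation `x ⋆ y := (x·y)/y`. -/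
def star {S : Type*} (mul rd : S → S → S) (x y : S) : S := rd (mul x y) y

section SystemA

variable {S : Type*} {mul ld rd : S → S → S}

theorem star_eq_mul_rd (A3 : ∀ x y : S, mul (rd x y) y = rd (mul x y) y) (x y : S) :
    star mul rd x y = mul (rd x y) y :=
  (A3 x y).symm

theorem rd_star_left (A3 : ∀ x y : S, mul (rd x y) y = rd (mul x y) y)
    (A4 : ∀ x y z : S, rd (mul (rd x y) y) z = rd x z) (x y z : S) :
    rd (star mul rd x y) z = rd x z := by
  rw [star_eq_mul_rd A3, A4]

theorem star_star_self (A3 : ∀ x y : S, mul (rd x y) y = rd (mul x y) y)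
    (A4 : ∀ x y z : S, rd (mul (rd x y) y) z = rd x z) (y z : S) :
    star mul rd (star mul rd y z) z = star mul rd y z := by
  rw [star_eq_mul_rd A3 (star mul rd y z), rd_star_left A3 A4, ← star_eq_mul_rd A3]

theorem mul_rd_star (A3 : ∀ x y : S, mul (rd x y) y = rd (mul x y) y)
    (A4 : ∀ x y z : S, rd (mul (rd x y) y) z = rd x z)
    (A5 : ∀ x y z : S, mul (rd (mul x y) z) z = mul x (mul (rd y z) z)) (x y z : S) :
    mul (rd x y) (star mul rd y z) = star mul rd x z := by
  rw [star_eq_mul_rd A3 y, ← A5, A4, ← star_eq_mul_rd A3]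

theorem star_star_right (A3 : ∀ x y : S, mul (rd x y) y = rd (mul x y) y)
    (A4 : ∀ x y z : S, rd (mul (rd x y) y) z = rd x z)
    (A5 : ∀ x y z : S, mul (rd (mul x y) z) z = mul x (mul (rd y z) z)) (x y z : S) :
    star mul rd x (star mul rd y z) = star mul rd x z := by
  set w := star mul rd y z
  calc star mul rd x w = mul (rd x w) w := star_eq_mul_rd A3 x w
    _ = mul (rd x w) (star mul rd w z) := by rw [star_star_self A3 A4]
    _ = star mul rd x z := mul_rd_star A3 A4 A5 x w z

theorem star_mul_left (A3 : ∀ x y : S, mul (rd x y) y = rd (mul x y) y)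
    (A5 : ∀ x y z : S, mul (rd (mul x y) z) z = mul x (mul (rd y z) z)) (x y z : S) :
    star mul rd (mul x y) z = mul x (star mul rd y z) := by
  rw [star_eq_mul_rd A3, A5, ← star_eq_mul_rd A3]

theorem star_ld_left (A1 : ∀ x y : S, ld x (mul x y) = y) (A2 : ∀ x y : S, mul x (ld x y) = y)
    (A3 : ∀ x y : S, mul (rd x y) y = rd (mul x y) y)
    (A5 : ∀ x y z : S, mul (rd (mul x y) z) z = mul x (mul (rd y z) z)) (x y z : S) :
    star mul rd (ld x y) z = ld x (star mul rd y z) := by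
  rw [← A1 x (star mul rd (ld x y) z), ← star_mul_left A3 A5, A2]

theorem star_rd_left (A3 : ∀ x y : S, mul (rd x y) y = rd (mul x y) y)
    (A4 : ∀ x y z : S, rd (mul (rd x y) y) z = rd x z)
    (A5 : ∀ x y z : S, mul (rd (mul x y) z) z = mul x (mul (rd y z) z)) (x y z : S) :
    star mul rd (rd x y) z = rd x (star mul rd y z) :=
  calc star mul rd (rd x y) z = star mul rd (rd x y) (star mul rd y z) :=
        (star_star_right A3 A4 A5 _ y z).symm
    _ = rd (mul (rd x y) (star mul rd y z)) (star mul rd y z) := rfl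
    _ = rd (star mul rd x z) (star mul rd y z) := by rw [mul_rd_star A3 A4 A5]
    _ = rd x (star mul rd y z) := rd_star_left A3 A4 x z _

end SystemA

/-- In an algebra satisfying system (A), with `x ⋆ y := (x·y)/y`,
we have `(x·y) ⋆ z = x·(y ⋆ z)`, `(x\y) ⋆ z = x\(y ⋆ z)` and `(x/y) ⋆ z = x/(y ⋆ z)`. -/
theorem star_translations {S : Type*} (mul ld rd : S → S → S)
    (A1 : ∀ x y : S, ld x (mul x y) = y)
    (A2 : ∀ x y : S, mul x (ld x y) = y)
    (A3 : ∀ x y : S, mul (rd x y) y = rd (mul x y) y)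
    (A4 : ∀ x y z : S, rd (mul (rd x y) y) z = rd x z)
    (A5 : ∀ x y z : S, mul (rd (mul x y) z) z = mul x (mul (rd y z) z)) :
    ∀ x y z : S,
      star mul rd (mul x y) z = mul x (star mul rd y z) ∧
      star mul rd (ld x y) z = ld x (star mul rd y z) ∧
      star mul rd (rd x y) z = rd x (star mul rd y z) :=
  fun x y z =>
    ⟨star_mul_left A3 A5 x y z, star_ld_left A1 A2 A3 A5 x y z, star_rd_left A3 A4 A5 x y z⟩
end

section
/- Let (S; ·, \, /) be an algebra satisfying system (A), and define x ⋆ y := (x·y)/y. Then for all x, y, z in S: (x ⋆ z)·(y ⋆ z) = (x·y) ⋆ z, (x ⋆ z) \ (y ⋆ z) = (x \ y) ⋆ z, and (x ⋆ z)/(y ⋆ z) = (x/y) ⋆ z. (Equivalently, the map sending x to the left ⋆-translation by x is a homomorphism with respect to pointwise operations.) -/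
/-!
Two facts drive everything: `(x ⋆ y) ⋆ z = x ⋆ z` and `(x·y) ⋆ z = x·(y ⋆ z)`. Since `(u·y)/z`
depends on `u` only through `u ⋆ y`, we get `((x ⋆ z)·y)/z = (x·y)/z`, and hence the product
identity. The left-division identity follows from it by left cancellation. For right division,
`x ⋆ z = ((x/y) ⋆ z)·(y ⋆ z)`, so `(x ⋆ z)/(y ⋆ z) = ((x/y) ⋆ z) ⋆ (y ⋆ z)`; idempotency
`b ⋆ b = b` makes every product `q·b` a fixed point of `_ ⋆ b`, and `(x/y) ⋆ z` is such a product,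
namely `((x/y)/y)·(y ⋆ z)`.
-/

structure SystemA {S : Type*} (mul ld rd : S → S → S) : Prop where
  ld_mul : ∀ x y, ld x (mul x y) = y
  mul_ld : ∀ x y, mul x (ld x y) = y
  rd_mul_comm : ∀ x y, mul (rd x y) y = rd (mul x y) y
  rd_mul_rd : ∀ x y z, rd (mul (rd x y) y) z = rd x z
  mul_rd_mul : ∀ x y z, mul (rd (mul x y) z) z = mul x (mul (rd y z) z)

namespace SystemA

variable {S : Type*} {mul ld rd : S → S → S}

local infixl:70 " ⋆ " => star mul rd

theorem star_eq_rd_mul (h : SystemA mul ld rd) (x y : S) : x ⋆ y = mul (rd x y) y :=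
  (h.rd_mul_comm x y).symm

theorem rd_star (h : SystemA mul ld rd) (x y z : S) : rd (x ⋆ y) z = rd x z := by
  rw [h.star_eq_rd_mul, h.rd_mul_rd]

theorem star_star (h : SystemA mul ld rd) (x y z : S) : x ⋆ y ⋆ z = x ⋆ z := by
  rw [h.star_eq_rd_mul (x ⋆ y), h.rd_star, ← h.star_eq_rd_mul]

theorem star_mul (h : SystemA mul ld rd) (x y z : S) : mul x y ⋆ z = mul x (y ⋆ z) := by
  rw [h.star_eq_rd_mul, h.mul_rd_mul, ← h.star_eq_rd_mul]

theorem mul_star_right (h : SystemA mul ld rd) (x y : S) : mul (x ⋆ y) y = mul x y ⋆ y :=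
  h.rd_mul_comm (mul x y) y

theorem rd_mul_eq_rd_mul_star (h : SystemA mul ld rd) (x y z : S) :
    rd (mul x y) z = rd (mul (x ⋆ y) y) z := by
  rw [← h.rd_star (mul x y) y, h.mul_star_right]

theorem rd_mul_star_left (h : SystemA mul ld rd) (x y z : S) :
    rd (mul (x ⋆ z) y) z = rd (mul x y) z := by
  rw [h.rd_mul_eq_rd_mul_star, h.star_star, ← h.rd_mul_eq_rd_mul_star]

theorem mul_star_star (h : SystemA mul ld rd) (x y z : S) :
    mul (x ⋆ z) (y ⋆ z) = mul x y ⋆ z := by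
  rw [← h.star_mul, h.star_eq_rd_mul, h.rd_mul_star_left, ← h.star_eq_rd_mul]

theorem ld_star_star (h : SystemA mul ld rd) (x y z : S) :
    ld (x ⋆ z) (y ⋆ z) = ld x y ⋆ z := by
  rw [← h.ld_mul (x ⋆ z) (ld x y ⋆ z), h.mul_star_star, h.mul_ld]

theorem star_self (h : SystemA mul ld rd) (x : S) : x ⋆ x = x := by
  have key : mul (rd x x) (x ⋆ x) = mul (rd x x) x := by
    rw [← h.star_mul, ← h.star_eq_rd_mul, h.star_star, h.star_eq_rd_mul]
  rw [← h.ld_mul (rd x x) (x ⋆ x), key, h.ld_mul]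

theorem star_mul_self (h : SystemA mul ld rd) (x y : S) : mul x y ⋆ y = mul x y := by
  rw [h.star_mul, h.star_self]

theorem star_eq_mul_star (h : SystemA mul ld rd) (x y z : S) :
    x ⋆ z = mul (rd x y) (y ⋆ z) := by
  rw [← h.star_mul, ← h.star_eq_rd_mul, h.star_star]

theorem rd_star_star (h : SystemA mul ld rd) (x y z : S) :
    rd (x ⋆ z) (y ⋆ z) = rd x y ⋆ z := by
  have hx : x ⋆ z = mul (rd x y ⋆ z) (y ⋆ z) := by
    rw [h.mul_star_star, ← h.star_eq_rd_mul, h.star_star]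
  calc rd (x ⋆ z) (y ⋆ z) = rd x y ⋆ z ⋆ (y ⋆ z) := by rw [hx]; rfl
    _ = rd x y ⋆ z := by rw [h.star_eq_mul_star (rd x y) y z, h.star_mul_self]

end SystemA

/-- In an algebra satisfying system (A),
`(x ⋆ z)·(y ⋆ z) = (x·y) ⋆ z`, `(x ⋆ z)\(y ⋆ z) = (x\y) ⋆ z` and
`(x ⋆ z)/(y ⋆ z) = (x/y) ⋆ z`. -/
theorem star_left_translation_hom {S : Type*} (mul ld rd : S → S → S)
    (A1 : ∀ x y : S, ld x (mul x y) = y)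
    (A2 : ∀ x y : S, mul x (ld x y) = y)
    (A3 : ∀ x y : S, mul (rd x y) y = rd (mul x y) y)
    (A4 : ∀ x y z : S, rd (mul (rd x y) y) z = rd x z)
    (A5 : ∀ x y z : S, mul (rd (mul x y) z) z = mul x (mul (rd y z) z)) :
    ∀ x y z : S,
      mul (star mul rd x z) (star mul rd y z) = star mul rd (mul x y) z ∧
      ld (star mul rd x z) (star mul rd y z) = star mul rd (ld x y) z ∧
      rd (star mul rd x z) (star mul rd y z) = star mul rd (rd x y) z := by
  have h : SystemA mul ld rd := ⟨A1, A2, A3, A4, A5⟩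
  exact fun x y z => ⟨h.mul_star_star x y z, h.ld_star_star x y z, h.rd_star_star x y z⟩
end

section
/- An algebra (S; ·, \, /) with three binary operations satisfies system (A) if and only if it is a right product quasigroup, i.e., there exist a quasigroup Q, a right zero semigroup R, and a bijection f : S → Q × R preserving each of the operations ·, \ and / (the product carrying componentwise operations). -/
/-!
Write `x ⋄ y := (x/y)·y`. System (A) makes `⋄` a rectangular band
(`x ⋄ x = x`, `(x ⋄ y) ⋄ z = x ⋄ z = x ⋄ (y ⋄ z)`), and each of `·`, `\`, `/` acts through it
componentwise: `(x ∘ y) ⋄ z = (x ⋄ z) ∘ (y ⋄ z)` and `z ⋄ (x ∘ y) = z ⋄ y`. So for a base point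
`a`, the map `x ↦ (x ⋄ a, a ⋄ x)` identifies `S` with `Q × R`, where `Q` is the set of fixed
points of `· ⋄ a` (a quasigroup under the restricted operations) and `R` the set of fixed points
of `a ⋄ ·` (on which all three operations become right projection); its inverse is
`(q, r) ↦ q ⋄ r`. Conversely the identities of (A) hold in `Q × R` componentwise and pull back
along the injection.
-/

universe u

structure SystemA_s5 {S : Type*} (mul ld rd : S → S → S) : Prop where
  ld_mul : ∀ x y, ld x (mul x y) = y
  mul_ld : ∀ x y, mul x (ld x y) = y
  mul_rd : ∀ x y, mul (rd x y) y = rd (mul x y) y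
  rd_mul_rd : ∀ x y z, rd (mul (rd x y) y) z = rd x z
  mul_rd_mul : ∀ x y z, mul (rd (mul x y) z) z = mul x (mul (rd y z) z)

namespace SystemA_s5

section Transfer

variable {S T : Type*} {mul ld rd : S → S → S} {mulT ldT rdT : T → T → T}

theorem of_injective (hT : SystemA_s5 mulT ldT rdT) {f : S → T} (hf : f.Injective)
    (hmul : ∀ x y, f (mul x y) = mulT (f x) (f y))
    (hld : ∀ x y, f (ld x y) = ldT (f x) (f y))
    (hrd : ∀ x y, f (rd x y) = rdT (f x) (f y)) :
    SystemA_s5 mul ld rd where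
  ld_mul x y := hf <| by rw [hld, hmul, hT.ld_mul]
  mul_ld x y := hf <| by rw [hmul, hld, hT.mul_ld]
  mul_rd x y := hf <| by simp only [hmul, hrd, hT.mul_rd]
  rd_mul_rd x y z := hf <| by simp only [hmul, hrd, hT.rd_mul_rd]
  mul_rd_mul x y z := hf <| by simp only [hmul, hrd, hT.mul_rd_mul]

theorem prod_of_quasigroup {Q R : Type*} {mQ lQ rQ : Q → Q → Q} {mR lR rR : R → R → R}
    (lQ_mQ : ∀ x y, lQ x (mQ x y) = y) (mQ_lQ : ∀ x y, mQ x (lQ x y) = y)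
    (rQ_mQ : ∀ x y, rQ (mQ x y) y = x) (mQ_rQ : ∀ x y, mQ (rQ x y) y = x)
    (mR_eq : ∀ x y, mR x y = y) (lR_eq : ∀ x y, lR x y = y) (rR_eq : ∀ x y, rR x y = y) :
    SystemA_s5 (fun p q : Q × R => (mQ p.1 q.1, mR p.2 q.2))
      (fun p q => (lQ p.1 q.1, lR p.2 q.2)) (fun p q => (rQ p.1 q.1, rR p.2 q.2)) where
  ld_mul _ _ := by simp only [lQ_mQ, mR_eq, lR_eq]
  mul_ld _ _ := by simp only [mQ_lQ, mR_eq, lR_eq]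
  mul_rd _ _ := by simp only [rQ_mQ, mQ_rQ, mR_eq, rR_eq]
  rd_mul_rd _ _ _ := by simp only [mQ_rQ, mR_eq, rR_eq]
  mul_rd_mul _ _ _ := by simp only [mQ_rQ, mR_eq, rR_eq]

end Transfer

section Decomposition

variable {S : Type*} {mul ld rd : S → S → S}

local notation:max "(" x " ⋄ " y ")" => mul (rd x y) y

theorem mul_left_cancel (h : SystemA_s5 mul ld rd) {x y z : S} (hyz : mul x y = mul x z) :
    y = z := by
  rw [← h.ld_mul x y, hyz, h.ld_mul]

theorem mix_mix_left (h : SystemA_s5 mul ld rd) (x y z : S) : ((x ⋄ y) ⋄ z) = (x ⋄ z) := by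
  rw [h.rd_mul_rd]

theorem mul_rd_mix (h : SystemA_s5 mul ld rd) (x y z : S) : mul (rd x y) (y ⋄ z) = (x ⋄ z) := by
  rw [← h.mul_rd_mul, h.mix_mix_left]

theorem mix_self (h : SystemA_s5 mul ld rd) (x : S) : (x ⋄ x) = x :=
  h.mul_left_cancel (h.mul_rd_mix x x x)

theorem mix_mix_right (h : SystemA_s5 mul ld rd) (x y z : S) : (x ⋄ (y ⋄ z)) = (x ⋄ z) := by
  simpa only [h.mix_mix_left] using h.mul_rd_mix x (y ⋄ z) z

theorem mix_mul_left (h : SystemA_s5 mul ld rd) (x y z : S) : (mul x y ⋄ z) = mul x (y ⋄ z) :=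
  h.mul_rd_mul x y z

theorem mix_ld_left (h : SystemA_s5 mul ld rd) (x y z : S) : (ld x y ⋄ z) = ld x (y ⋄ z) :=
  h.mul_left_cancel (x := x) (by rw [← h.mix_mul_left, h.mul_ld, h.mul_ld])

theorem mix_rd_left (h : SystemA_s5 mul ld rd) (x y z : S) : (rd x y ⋄ z) = rd x (y ⋄ z) :=
  calc (rd x y ⋄ z) = (rd x y ⋄ (y ⋄ z)) := (h.mix_mix_right _ _ _).symm
    _ = rd (mul (rd x y) (y ⋄ z)) (y ⋄ z) := h.mul_rd _ _
    _ = rd (x ⋄ z) (y ⋄ z) := by rw [h.mul_rd_mix]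
    _ = rd x (y ⋄ z) := h.rd_mul_rd _ _ _

theorem mix_mul_right (h : SystemA_s5 mul ld rd) (x y z : S) : (x ⋄ mul y z) = (x ⋄ z) := by
  simpa only [h.mix_mul_left, h.mix_self] using h.mul_rd_mix x (mul y z) z

theorem mix_ld_right (h : SystemA_s5 mul ld rd) (x y z : S) : (x ⋄ ld y z) = (x ⋄ z) := by
  rw [← h.mix_mul_right x y (ld y z), h.mul_ld]

theorem mix_rd_right (h : SystemA_s5 mul ld rd) (x y z : S) : (x ⋄ rd y z) = (x ⋄ z) := by
  simpa only [h.mix_rd_left, h.mix_self] using h.mix_mix_right x (rd y z) z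

theorem mul_mix_self (h : SystemA_s5 mul ld rd) (x y : S) : mul (x ⋄ y) y = mul x y := by
  rw [h.mul_rd, h.mix_mul_left, h.mix_self]

theorem mul_mix_left (h : SystemA_s5 mul ld rd) (x y z : S) : mul (x ⋄ z) y = mul x y := by
  rw [← h.mul_mix_self (x ⋄ z), h.mix_mix_left, h.mul_mix_self]

theorem ld_mix_left (h : SystemA_s5 mul ld rd) (x y z : S) : ld (x ⋄ z) y = ld x y :=
  h.mul_left_cancel (by rw [h.mul_ld, h.mul_mix_left, h.mul_ld])

theorem mix_mul (h : SystemA_s5 mul ld rd) (x y z : S) :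
    (mul x y ⋄ z) = mul (x ⋄ z) (y ⋄ z) := by
  rw [h.mix_mul_left, h.mul_mix_left]

theorem mix_ld (h : SystemA_s5 mul ld rd) (x y z : S) :
    (ld x y ⋄ z) = ld (x ⋄ z) (y ⋄ z) := by
  rw [h.mix_ld_left, h.ld_mix_left]

theorem mix_rd (h : SystemA_s5 mul ld rd) (x y z : S) :
    (rd x y ⋄ z) = rd (x ⋄ z) (y ⋄ z) := by
  rw [h.mix_rd_left, h.rd_mul_rd]

theorem mix_eq_left_of_mix_eq (h : SystemA_s5 mul ld rd) {a x y : S} (hx : (x ⋄ a) = x)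
    (hy : (y ⋄ a) = y) : (x ⋄ y) = x := by
  rw [← hy, h.mix_mix_right, hx]

theorem rd_mul_eq_of_mix_eq (h : SystemA_s5 mul ld rd) {a x y : S} (hx : (x ⋄ a) = x)
    (hy : (y ⋄ a) = y) : rd (mul x y) y = x := by
  rw [← h.mul_rd, h.mix_eq_left_of_mix_eq hx hy]

def equivProd (h : SystemA_s5 mul ld rd) (a : S) :
    S ≃ {x : S // (x ⋄ a) = x} × {x : S // (a ⋄ x) = x} where
  toFun x := (⟨(x ⋄ a), h.mix_mix_left x a a⟩, ⟨(a ⋄ x), h.mix_mix_right a a x⟩)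
  invFun p := (p.1.1 ⋄ p.2.1)
  left_inv x := by simp only [h.mix_mix_left, h.mix_mix_right, h.mix_self]
  right_inv p := Prod.ext (Subtype.ext ((h.mix_mix_left _ _ _).trans p.1.2))
    (Subtype.ext ((h.mix_mix_right _ _ _).trans p.2.2))

end Decomposition

end SystemA_s5

/-- An algebra `(S; ·, \, /)` satisfies system (A) if and only if it is a
right product quasigroup: there exist a quasigroup `Q`, a right zero semigroup `R` and a
bijection `f : S → Q × R` preserving the three operations (componentwise on the product). -/
theorem systemA_iff_rightProductQuasigroup {S : Type u} (mul ld rd : S → S → S) :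
    ((∀ x y : S, ld x (mul x y) = y) ∧
     (∀ x y : S, mul x (ld x y) = y) ∧
     (∀ x y : S, mul (rd x y) y = rd (mul x y) y) ∧
     (∀ x y z : S, rd (mul (rd x y) y) z = rd x z) ∧
     (∀ x y z : S, mul (rd (mul x y) z) z = mul x (mul (rd y z) z)))
    ↔
    ∃ (Q : Type u) (R : Type u) (mQ lQ rQ : Q → Q → Q) (mR lR rR : R → R → R)
      (f : S → Q × R),
      (∀ x y, lQ x (mQ x y) = y) ∧
      (∀ x y, mQ x (lQ x y) = y) ∧
      (∀ x y, rQ (mQ x y) y = x) ∧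
      (∀ x y, mQ (rQ x y) y = x) ∧
      (∀ x y, mR x y = y) ∧ (∀ x y, lR x y = y) ∧ (∀ x y, rR x y = y) ∧
      Function.Bijective f ∧
      (∀ x y, f (mul x y) = (mQ (f x).1 (f y).1, mR (f x).2 (f y).2)) ∧
      (∀ x y, f (ld x y) = (lQ (f x).1 (f y).1, lR (f x).2 (f y).2)) ∧
      (∀ x y, f (rd x y) = (rQ (f x).1 (f y).1, rR (f x).2 (f y).2)) := by
  constructor
  · rintro ⟨A1, A2, A3, A4, A5⟩
    have h : SystemA_s5 mul ld rd := ⟨A1, A2, A3, A4, A5⟩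
    rcases isEmpty_or_nonempty S with hS | ⟨⟨a⟩⟩
    · refine ⟨S, S, mul, ld, rd, mul, ld, rd, fun x => (x, x), ?_⟩
      simp [Function.Bijective, Function.Injective, Function.Surjective]
    refine ⟨{x : S // mul (rd x a) a = x}, {x : S // mul (rd a x) x = x},
      fun q r => ⟨mul q r, by rw [h.mix_mul_left, r.2]⟩,
      fun q r => ⟨ld q r, by rw [h.mix_ld_left, r.2]⟩,
      fun q r => ⟨rd q r, by rw [h.mix_rd_left, r.2]⟩,
      fun _ r => r, fun _ r => r, fun _ r => r, h.equivProd a,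
      fun q r => Subtype.ext (h.ld_mul q r), fun q r => Subtype.ext (h.mul_ld q r),
      fun q r => Subtype.ext (h.rd_mul_eq_of_mix_eq q.2 r.2),
      fun q r => Subtype.ext (h.mix_eq_left_of_mix_eq q.2 r.2),
      fun _ _ => rfl, fun _ _ => rfl, fun _ _ => rfl, (h.equivProd a).bijective,
      fun x y => Prod.ext (Subtype.ext (h.mix_mul x y a)) (Subtype.ext (h.mix_mul_right a x y)),
      fun x y => Prod.ext (Subtype.ext (h.mix_ld x y a)) (Subtype.ext (h.mix_ld_right a x y)),
      fun x y => Prod.ext (Subtype.ext (h.mix_rd x y a)) (Subtype.ext (h.mix_rd_right a x y))⟩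
  · rintro ⟨Q, R, mQ, lQ, rQ, mR, lR, rR, f, h1, h2, h3, h4, h5, h6, h7, hf, hmul, hld, hrd⟩
    have h := (SystemA_s5.prod_of_quasigroup h1 h2 h3 h4 h5 h6 h7).of_injective hf.1 hmul hld hrd
    exact ⟨h.ld_mul, h.mul_ld, h.mul_rd, h.rd_mul_rd, h.mul_rd_mul⟩
end

section
/- Let (S; ·, \, /) be an algebra satisfying system (A). Then the following are equivalent: (i) (x/x)·y = y for all x, y; (ii) (x/x)·z = (y/y)·z for all x, y, z; (iii) (x·y)/(x·y) = y/y for all x, y; (iv) (x \ y)/(x \ y) = y/y for all x, y; (v) (x/y)/(x/y) = y/y for all x, y. -/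
/-!
Write `e y := y / y`. Under (A), all the conditions force the weaker law `e y · y = y`: with
`s := e y · y`, axiom (A4) gives `s / s = y / s`, and (A5) then turns `(s / s) · s = e y · s`
into `e y · s = e y · (e y · s)`, which cancels (left translations are injective by (A1)) to
`e y · y = y`. With this law in hand, the remaining implications are short computations with
(A3)–(A5) and cancellation.
-/

namespace LeftLoop

variable {S : Type*} {mul ld rd : S → S → S}

theorem injective_mul_left (A1 : ∀ x y : S, ld x (mul x y) = y) (a : S) :
    Function.Injective (mul a) :=
  fun u v h => by rw [← A1 a u, h, A1]

theorem rd_self_mul_self_of_rd_self_mul_eq (A1 : ∀ x y : S, ld x (mul x y) = y)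
    (A4 : ∀ x y z : S, rd (mul (rd x y) y) z = rd x z)
    (A5 : ∀ x y z : S, mul (rd (mul x y) z) z = mul x (mul (rd y z) z)) {y : S}
    (h : mul (rd (mul (rd y y) y) (mul (rd y y) y)) (mul (rd y y) y)
      = mul (rd y y) (mul (rd y y) y)) :
    mul (rd y y) y = y := by
  have key := A5 (rd y y) y (mul (rd y y) y)
  rw [A4] at key h
  rw [h] at key
  exact (injective_mul_left A1 _ (injective_mul_left A1 _ key)).symm

theorem rd_self_mul_of_forall_rd_self_mul_eq (A1 : ∀ x y : S, ld x (mul x y) = y)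
    (A4 : ∀ x y z : S, rd (mul (rd x y) y) z = rd x z)
    (A5 : ∀ x y z : S, mul (rd (mul x y) z) z = mul x (mul (rd y z) z))
    (h : ∀ x y z : S, mul (rd x x) z = mul (rd y y) z) (x y : S) :
    mul (rd x x) y = y := by
  rw [h x y y]
  exact rd_self_mul_self_of_rd_self_mul_eq A1 A4 A5 (h _ y _)

theorem rd_mul_self_of_rd_self_mul (A1 : ∀ x y : S, ld x (mul x y) = y)
    (A3 : ∀ x y : S, mul (rd x y) y = rd (mul x y) y)
    (A4 : ∀ x y z : S, rd (mul (rd x y) y) z = rd x z)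
    (A5 : ∀ x y z : S, mul (rd (mul x y) z) z = mul x (mul (rd y z) z))
    (h : ∀ x y : S, mul (rd x x) y = y) (x y : S) :
    rd (mul x y) (mul x y) = rd y y := by
  have hy : mul (rd y (mul x y)) (mul x y) = y := by
    apply injective_mul_left A1 x
    rw [← A5, h]
  have he : mul (rd (rd y y) y) y = rd y y := by rw [A3, h]
  calc rd (mul x y) (mul x y)
      = mul (rd (rd y y) (mul x y)) (mul x y) := by rw [A3, h]
    _ = mul (rd (mul (rd (rd y y) y) y) (mul x y)) (mul x y) := by rw [A4]
    _ = rd y y := by rw [A5, hy, he]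

theorem rd_self_mul_of_rd_mul_self (A1 : ∀ x y : S, ld x (mul x y) = y)
    (A4 : ∀ x y z : S, rd (mul (rd x y) y) z = rd x z)
    (A5 : ∀ x y z : S, mul (rd (mul x y) z) z = mul x (mul (rd y z) z))
    (h : ∀ x y : S, rd (mul x y) (mul x y) = rd y y) (x y : S) :
    mul (rd x x) y = y := by
  have hself (b : S) : mul (rd b b) b = b :=
    rd_self_mul_self_of_rd_self_mul_eq A1 A4 A5 (by rw [h])
  have hleft (w b : S) : mul (rd b b) (mul w b) = mul w b := by
    simpa only [h] using hself (mul w b)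
  have hx : mul (rd (mul (rd x x) y) x) x = mul (rd y x) x := by rw [A5, hleft]
  have hy : rd (mul (rd x x) y) y = rd y y := by rw [← A4 _ x, hx, A4]
  calc mul (rd x x) y
      = mul (rd x x) (mul (rd y y) y) := by rw [hself]
    _ = mul (rd (mul (rd x x) y) y) y := (A5 _ _ _).symm
    _ = y := by rw [hy, hself]

theorem rd_mul_self_of_rd_rd_self (A1 : ∀ x y : S, ld x (mul x y) = y)
    (A3 : ∀ x y : S, mul (rd x y) y = rd (mul x y) y)
    (A4 : ∀ x y z : S, rd (mul (rd x y) y) z = rd x z)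
    (A5 : ∀ x y z : S, mul (rd (mul x y) z) z = mul x (mul (rd y z) z))
    (h : ∀ x y : S, rd (rd x y) (rd x y) = rd y y) (x y : S) :
    rd (mul x y) (mul x y) = rd y y := by
  have hself (b : S) : mul (rd b b) b = b :=
    rd_self_mul_self_of_rd_self_mul_eq A1 A4 A5 (by rw [A3 b, h])
  have hxy : rd (mul (mul x y) y) y = mul x y := by rw [← A3, A5, hself]
  simpa only [hxy] using h (mul (mul x y) y) y

end LeftLoop

open LeftLoop in
/-- In an algebra satisfying system (A), the five listed identities
are equivalent. -/
theorem leftLoop_conditions_tfae {S : Type*} (mul ld rd : S → S → S)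
    (A1 : ∀ x y : S, ld x (mul x y) = y)
    (A2 : ∀ x y : S, mul x (ld x y) = y)
    (A3 : ∀ x y : S, mul (rd x y) y = rd (mul x y) y)
    (A4 : ∀ x y z : S, rd (mul (rd x y) y) z = rd x z)
    (A5 : ∀ x y z : S, mul (rd (mul x y) z) z = mul x (mul (rd y z) z)) :
    [(∀ x y : S, mul (rd x x) y = y),
     (∀ x y z : S, mul (rd x x) z = mul (rd y y) z),
     (∀ x y : S, rd (mul x y) (mul x y) = rd y y),
     (∀ x y : S, rd (ld x y) (ld x y) = rd y y),
     (∀ x y : S, rd (rd x y) (rd x y) = rd y y)].TFAE := by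
  tfae_have 1 → 2 := fun h x y z => by rw [h x z, h y z]
  tfae_have 2 → 1 := rd_self_mul_of_forall_rd_self_mul_eq A1 A4 A5
  tfae_have 1 → 3 := rd_mul_self_of_rd_self_mul A1 A3 A4 A5
  tfae_have 3 → 1 := rd_self_mul_of_rd_mul_self A1 A4 A5
  tfae_have 3 → 4 := fun h x y => by simpa only [A2] using (h x (ld x y)).symm
  tfae_have 4 → 3 := fun h x y => by simpa only [A1] using (h x (mul x y)).symm
  tfae_have 3 → 5 := fun h x y => by
    have hxy := h (rd (rd x y) y) y
    rwa [A3, A4] at hxy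
  tfae_have 5 → 3 := rd_mul_self_of_rd_rd_self A1 A3 A4 A5
  tfae_finish
end

section
/- Let (S; ·, \, /) be an algebra satisfying system (A). Then S satisfies the identity (x/x)·y = y (for all x, y) if and only if S is a right product left loop, i.e., there exist a left loop L, a right zero semigroup R, and a bijection f : S → L × R preserving each of the operations ·, \ and / (the product carrying componentwise operations). -/
/-!
Write `κ_z x = (x/z)·z`. Under `(x/x)·y = y`, the map `x ↦ x/x` sends `x·y`, `x\y` and `x/y` to
`y/y`, and every `κ_z` is an endomorphism of `(S; ·, \, /)` that depends on `z` only through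
`z/z` and fixes exactly the `x` with `x/x = z/z`. So the kernels `λ` of `x ↦ (κ_z x)_z` and `ρ` of
`x ↦ x/x` are congruences with `λ ∩ ρ = Δ`, and `κ_y x` is `λ`-related to `x` and `ρ`-related to
`y`; hence `S ≅ S/λ × S/ρ`. The factor `S/ρ` is a right zero semigroup, and `S/λ` is a left loop
because `(x/y)·y` and `(x·y)/y` are `λ`-related to `x`, and `κ_z (x/x) = z/z` for all `x`.
-/

structure IsSystemA {S : Type*} (mul ld rd : S → S → S) : Prop where
  ld_mul : ∀ x y, ld x (mul x y) = y
  mul_ld : ∀ x y, mul x (ld x y) = y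
  mul_rd_eq_rd_mul : ∀ x y, mul (rd x y) y = rd (mul x y) y
  rd_mul_rd : ∀ x y z, rd (mul (rd x y) y) z = rd x z
  mul_rd_mul : ∀ x y z, mul (rd (mul x y) z) z = mul x (mul (rd y z) z)

namespace IsSystemA

variable {S : Type*} {mul ld rd : S → S → S} (h : IsSystemA mul ld rd)
include h

local infixl:70 " ⬝ " => mul
local infixl:70 " ⧵ " => ld
local infixl:70 " ∕ " => rd

theorem mul_rd_rd (x y : S) : x ∕ y ∕ y ⬝ y = x ∕ y := by
  rw [h.mul_rd_eq_rd_mul, h.rd_mul_rd]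

theorem mul_rd_mul_rd (x y z : S) : x ∕ y ⬝ y ∕ z ⬝ z = x ∕ z ⬝ z := by
  rw [h.rd_mul_rd]

theorem mul_rd_eq_of_mul_rd_eq_self {w z : S} (hw : w ∕ z ⬝ z = w) (p : S) :
    p ∕ w ⬝ w = p ∕ z ⬝ z :=
  calc p ∕ w ⬝ w = p ∕ w ⬝ (w ∕ z ⬝ z) := by rw [hw]
    _ = p ∕ w ⬝ w ∕ z ⬝ z := (h.mul_rd_mul _ _ _).symm
    _ = p ∕ z ⬝ z := h.mul_rd_mul_rd _ _ _

theorem mul_rd_rd_self_right (p x : S) : p ∕ (x ∕ x) ⬝ (x ∕ x) = p ∕ x ⬝ x :=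
  h.mul_rd_eq_of_mul_rd_eq_self (h.mul_rd_rd x x) p

theorem mul_rd_ld (x y z : S) : x ⧵ y ∕ z ⬝ z = x ⧵ (y ∕ z ⬝ z) := by
  conv_rhs => rw [← h.mul_ld x y, h.mul_rd_mul, h.ld_mul]

section LeftIdentity

variable (hl : ∀ x y : S, mul (rd x x) y = y)
include hl

theorem mul_rd_rd_self_left (x z : S) : x ∕ x ∕ z ⬝ z = z ∕ z := by
  rw [h.mul_rd_eq_rd_mul, hl]

theorem mul_rd_mul_self (x y : S) : x ⬝ y ∕ y ⬝ y = x ⬝ y := by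
  rw [h.mul_rd_mul, hl]

theorem rd_self_eq_of_mul_rd_eq_self {w z : S} (hw : w ∕ z ⬝ z = w) :
    w ∕ w = z ∕ z := by
  rw [← h.mul_rd_rd_self_left hl w w, h.mul_rd_eq_of_mul_rd_eq_self hw,
    h.mul_rd_rd_self_left hl]

theorem rd_self_mul (x y : S) : x ⬝ y ∕ (x ⬝ y) = y ∕ y :=
  h.rd_self_eq_of_mul_rd_eq_self hl (h.mul_rd_mul_self hl x y)

theorem rd_self_ld (x y : S) : x ⧵ y ∕ (x ⧵ y) = y ∕ y := by
  conv_rhs => rw [← h.mul_ld x y, h.rd_self_mul hl]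

theorem rd_self_rd (x y : S) : x ∕ y ∕ (x ∕ y) = y ∕ y :=
  h.rd_self_eq_of_mul_rd_eq_self hl (h.mul_rd_rd x y)

theorem mul_rd_eq_self {p v : S} (hpv : p ∕ p = v ∕ v) :
    p ∕ v ⬝ v = p := by
  rw [← h.mul_rd_rd_self_right, ← hpv, h.mul_rd_rd_self_right, hl]

theorem mul_rd_mul_eq_mul (x w y : S) : x ∕ w ⬝ w ⬝ y = x ⬝ y := by
  have hright : ∀ x : S, x ∕ y ⬝ y ⬝ y = x ⬝ y := fun x => by
    rw [h.mul_rd_eq_rd_mul, h.mul_rd_mul_self hl]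
  rw [← hright, h.mul_rd_mul_rd, hright]

theorem ld_mul_rd_eq_ld (x w y : S) : (x ∕ w ⬝ w) ⧵ y = x ⧵ y := by
  conv_lhs => rw [← h.mul_ld x y, ← h.mul_rd_mul_eq_mul hl x w, h.ld_mul]

theorem mul_rd_mul_distrib (x y z : S) :
    x ⬝ y ∕ z ⬝ z = (x ∕ z ⬝ z) ⬝ (y ∕ z ⬝ z) := by
  rw [h.mul_rd_mul, h.mul_rd_mul_eq_mul hl]

theorem mul_rd_ld_distrib (x y z : S) :
    x ⧵ y ∕ z ⬝ z = (x ∕ z ⬝ z) ⧵ (y ∕ z ⬝ z) := by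
  rw [h.mul_rd_ld, h.ld_mul_rd_eq_ld hl]

theorem mul_rd_rd_distrib (x y z : S) :
    x ∕ y ∕ z ⬝ z = (x ∕ z ⬝ z) ∕ (y ∕ z ⬝ z) := by
  set p := x ∕ y ∕ z ⬝ z
  set v := y ∕ z ⬝ z
  have hpv : p ∕ p = v ∕ v := by rw [h.rd_self_mul hl, h.rd_self_mul hl]
  calc p = p ∕ v ⬝ v := (h.mul_rd_eq_self hl hpv).symm
    _ = p ⬝ v ∕ v := h.mul_rd_eq_rd_mul p v
    _ = (x ∕ z ⬝ z) ∕ v := by rw [← h.mul_rd_mul_distrib hl, h.mul_rd_mul_rd]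

end LeftIdentity

end IsSystemA

section Decomposition

variable {S : Type*} {mul ld rd : S → S → S}

def rdMulKer (mul rd : S → S → S) : Setoid S := Setoid.ker fun x z => mul (rd x z) z

def rdSelfKer (rd : S → S → S) : Setoid S := Setoid.ker fun x => rd x x

theorem rdMulKer_iff {x y : S} :
    rdMulKer mul rd x y ↔ ∀ z, mul (rd x z) z = mul (rd y z) z :=
  funext_iff

theorem rdMulKer_congr {op : S → S → S}
    (hop : ∀ x y z, mul (rd (op x y) z) z = op (mul (rd x z) z) (mul (rd y z) z))
    ⦃x₁ x₂ : S⦄ (hx : rdMulKer mul rd x₁ x₂) ⦃y₁ y₂ : S⦄ (hy : rdMulKer mul rd y₁ y₂) :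
    rdMulKer mul rd (op x₁ y₁) (op x₂ y₂) :=
  rdMulKer_iff.2 fun z => by rw [hop, hop, rdMulKer_iff.1 hx, rdMulKer_iff.1 hy]

theorem IsSystemA.rdMulKer_mul_rd (h : IsSystemA mul ld rd) (x y : S) :
    rdMulKer mul rd (mul (rd x y) y) x :=
  rdMulKer_iff.2 (h.mul_rd_mul_rd x y)

theorem IsSystemA.rdMulKer_rd_self (h : IsSystemA mul ld rd)
    (hl : ∀ x y : S, mul (rd x x) y = y) (x y : S) : rdMulKer mul rd (rd x x) (rd y y) :=
  rdMulKer_iff.2 fun z => by rw [h.mul_rd_rd_self_left hl, h.mul_rd_rd_self_left hl]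

theorem bijective_mk_rdMulKer_prod_rdSelfKer (h : IsSystemA mul ld rd)
    (hl : ∀ x y : S, mul (rd x x) y = y) :
    Function.Bijective fun x : S =>
      ((Quotient.mk (rdMulKer mul rd) x), (Quotient.mk (rdSelfKer rd) x)) := by
  refine ⟨fun x y hxy => ?_, ?_⟩
  · obtain ⟨hL, hR⟩ := Prod.mk.inj hxy
    calc x = mul (rd x y) y := (h.mul_rd_eq_self hl (Quotient.exact hR)).symm
      _ = mul (rd y y) y := rdMulKer_iff.1 (Quotient.exact hL) y
      _ = y := hl y y
  · rintro ⟨⟨x⟩, ⟨y⟩⟩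
    exact ⟨mul (rd x y) y, Prod.ext (Quotient.sound (h.rdMulKer_mul_rd x y))
      (Quotient.sound (h.rd_self_mul hl _ _))⟩

end Decomposition

/-- An algebra satisfying system (A) satisfies `(x/x)·y = y` iff it is a
right product left loop: there exist a left loop `L` (a quasigroup with `x/x = y/y`),
a right zero semigroup `R` and an operation-preserving bijection `f : S → L × R`. -/
theorem systemA_leftLoopIdentity_iff_rightProductLeftLoop {S : Type u}
    (mul ld rd : S → S → S)
    (A1 : ∀ x y : S, ld x (mul x y) = y)
    (A2 : ∀ x y : S, mul x (ld x y) = y)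
    (A3 : ∀ x y : S, mul (rd x y) y = rd (mul x y) y)
    (A4 : ∀ x y z : S, rd (mul (rd x y) y) z = rd x z)
    (A5 : ∀ x y z : S, mul (rd (mul x y) z) z = mul x (mul (rd y z) z)) :
    (∀ x y : S, mul (rd x x) y = y)
    ↔
    ∃ (L : Type u) (R : Type u) (mL lL rL : L → L → L) (mR lR rR : R → R → R)
      (f : S → L × R),
      (∀ x y, lL x (mL x y) = y) ∧
      (∀ x y, mL x (lL x y) = y) ∧
      (∀ x y, rL (mL x y) y = x) ∧
      (∀ x y, mL (rL x y) y = x) ∧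
      (∀ x y, rL x x = rL y y) ∧
      (∀ x y, mR x y = y) ∧ (∀ x y, lR x y = y) ∧ (∀ x y, rR x y = y) ∧
      Function.Bijective f ∧
      (∀ x y, f (mul x y) = (mL (f x).1 (f y).1, mR (f x).2 (f y).2)) ∧
      (∀ x y, f (ld x y) = (lL (f x).1 (f y).1, lR (f x).2 (f y).2)) ∧
      (∀ x y, f (rd x y) = (rL (f x).1 (f y).1, rR (f x).2 (f y).2)) := by
  constructor
  · intro hl
    have h : IsSystemA mul ld rd := ⟨A1, A2, A3, A4, A5⟩
    refine ⟨Quotient (rdMulKer mul rd), Quotient (rdSelfKer rd),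
      Quotient.map₂ mul (rdMulKer_congr (h.mul_rd_mul_distrib hl)),
      Quotient.map₂ ld (rdMulKer_congr (h.mul_rd_ld_distrib hl)),
      Quotient.map₂ rd (rdMulKer_congr (h.mul_rd_rd_distrib hl)),
      fun _ y => y, fun _ y => y, fun _ y => y, fun x => (⟦x⟧, ⟦x⟧),
      ?_, ?_, ?_, ?_, ?_, fun _ _ => rfl, fun _ _ => rfl, fun _ _ => rfl,
      bijective_mk_rdMulKer_prod_rdSelfKer h hl, ?_, ?_, ?_⟩
    · rintro ⟨x⟩ ⟨y⟩
      exact congrArg _ (A1 x y)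
    · rintro ⟨x⟩ ⟨y⟩
      exact congrArg _ (A2 x y)
    · rintro ⟨x⟩ ⟨y⟩
      exact Quotient.sound (A3 x y ▸ h.rdMulKer_mul_rd x y)
    · rintro ⟨x⟩ ⟨y⟩
      exact Quotient.sound (h.rdMulKer_mul_rd x y)
    · rintro ⟨x⟩ ⟨y⟩
      exact Quotient.sound (h.rdMulKer_rd_self hl x y)
    · exact fun x y => Prod.ext rfl (Quotient.sound (h.rd_self_mul hl x y))
    · exact fun x y => Prod.ext rfl (Quotient.sound (h.rd_self_ld hl x y))
    · exact fun x y => Prod.ext rfl (Quotient.sound (h.rd_self_rd hl x y))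
  · rintro ⟨L, R, mL, lL, rL, mR, lR, rR, f, -, -, -, hrL_mul, hrL_self, hmR, -, -, hf, hfm, -,
      hfr⟩ x y
    apply hf.injective
    rw [hfm, hfr, hrL_self (f x).1 (f y).1, hrL_mul, hmR]
end

section
/- Let (S; ·, \, /) be an algebra satisfying system (A). Then S satisfies the identity (x \ x)·y = y (for all x, y) if and only if S is a right product loop, i.e., there exist a loop Q (a quasigroup satisfying x \ x = y/y), a right zero semigroup R, and a bijection f : S → Q × R preserving each of the operations ·, \ and / (the product carrying componentwise operations). -/
/-!
Write `e x = x \ x`. Under the loop identity, system (A) forces `e x = x / x`, makes every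
`e x` a left identity, and gives `e (x·y) = e (x \ y) = e (x / y) = e y` and
`(x·y) / y = x·e y`. Right multiplication by a fixed `e a` is then an endomorphism of `S`
onto the fibre `Q = e⁻¹(e a)`, which is a loop with identity `e a`, while the idempotents
`R = e(S)` form a right zero semigroup. Hence `x ↦ (x·e a, e x)` is an isomorphism
`S ≃ Q × R`, with inverse `(q, r) ↦ q·r`. Conversely, in `Q × R` every `x \ x` has the form
`(1, r)`, which is a left identity.
-/

universe u

structure SystemA_s9 {S : Type*} (mul ld rd : S → S → S) : Prop where
  ld_mul : ∀ x y, ld x (mul x y) = y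
  mul_ld : ∀ x y, mul x (ld x y) = y
  mul_rd_eq_rd_mul : ∀ x y, mul (rd x y) y = rd (mul x y) y
  rd_mul_rd : ∀ x y z, rd (mul (rd x y) y) z = rd x z
  mul_rd_mul_assoc : ∀ x y z, mul (rd (mul x y) z) z = mul x (mul (rd y z) z)

structure SystemA_s9.WithLoopIdentity {S : Type*} (mul ld rd : S → S → S) : Prop
    extends SystemA_s9 mul ld rd where
  ld_self_mul : ∀ x y, mul (ld x x) y = y

def IsRightProductLoop {S : Type u} (mul ld rd : S → S → S) : Prop :=
  ∃ (Q : Type u) (R : Type u) (mQ lQ rQ : Q → Q → Q) (mR lR rR : R → R → R)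
    (f : S → Q × R),
    (∀ x y, lQ x (mQ x y) = y) ∧
    (∀ x y, mQ x (lQ x y) = y) ∧
    (∀ x y, rQ (mQ x y) y = x) ∧
    (∀ x y, mQ (rQ x y) y = x) ∧
    (∀ x y, lQ x x = rQ y y) ∧
    (∀ x y, mR x y = y) ∧ (∀ x y, lR x y = y) ∧ (∀ x y, rR x y = y) ∧
    Function.Bijective f ∧
    (∀ x y, f (mul x y) = (mQ (f x).1 (f y).1, mR (f x).2 (f y).2)) ∧
    (∀ x y, f (ld x y) = (lQ (f x).1 (f y).1, lR (f x).2 (f y).2)) ∧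
    (∀ x y, f (rd x y) = (rQ (f x).1 (f y).1, rR (f x).2 (f y).2))

namespace IsRightProductLoop

variable {S : Type u} {mul ld rd : S → S → S}

theorem ld_self_mul (hS : IsRightProductLoop mul ld rd) (x y : S) : mul (ld x x) y = y := by
  obtain ⟨Q, R, mQ, lQ, rQ, mR, lR, rR, f, -, -, -, hmQ_rQ, hloop, hmR, -, -, hf, hf_mul,
    hf_ld, -⟩ := hS
  apply hf.1
  rw [hf_mul, hf_ld, hmR, hloop (f x).1 (f y).1, hmQ_rQ]

theorem of_isEmpty [IsEmpty S] : IsRightProductLoop mul ld rd := by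
  refine ⟨S, S, mul, ld, rd, mul, ld, rd, fun x => (x, x), ?_, ?_, ?_, ?_, ?_, ?_, ?_, ?_,
    ⟨fun x => isEmptyElim x, fun p => isEmptyElim p⟩, ?_, ?_, ?_⟩ <;>
  exact fun x => isEmptyElim x

end IsRightProductLoop

namespace SystemA_s9

variable {S : Type*} {mul ld rd : S → S → S}

theorem ld_mul_rd_mul (h : SystemA_s9 mul ld rd) (x w z : S) :
    ld x (mul (rd w z) z) = mul (rd (ld x w) z) z := by
  have := h.mul_rd_mul_assoc x (ld x w) z
  rw [h.mul_ld] at this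
  rw [this, h.ld_mul]

theorem mul_rd_rd_mul (h : SystemA_s9 mul ld rd) (x y : S) :
    mul (rd (rd x y) y) y = rd x y := by
  rw [h.mul_rd_eq_rd_mul, h.rd_mul_rd]

end SystemA_s9

namespace SystemA_s9.WithLoopIdentity

variable {S : Type*} {mul ld rd : S → S → S}

theorem mul_rd_self (h : WithLoopIdentity mul ld rd) (x z : S) :
    mul x (rd z z) = mul (rd x z) z := by
  have : ld x (mul (rd x z) z) = rd z z := by
    rw [h.ld_mul_rd_mul, h.mul_rd_eq_rd_mul, h.ld_self_mul]
  rw [← this, h.mul_ld]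

theorem rd_self_mul (h : WithLoopIdentity mul ld rd) (y u : S) : mul (rd y y) u = u := by
  have hidem : mul (rd y y) (rd y y) = rd y y := by
    rw [h.mul_rd_self, h.mul_rd_rd_mul]
  have : ld (rd y y) (rd y y) = rd y y := by
    simpa only [hidem] using h.ld_mul (rd y y) (rd y y)
  simpa only [this] using h.ld_self_mul (rd y y) u

theorem ld_self_eq_rd_self (h : WithLoopIdentity mul ld rd) (z : S) : ld z z = rd z z := by
  have : mul z (rd z z) = z := (h.mul_rd_self z z).trans (h.rd_self_mul z z)
  simpa only [this] using h.ld_mul z (rd z z)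

theorem mul_ld_self (h : WithLoopIdentity mul ld rd) (x z : S) :
    mul x (ld z z) = mul (rd x z) z := by
  rw [h.ld_self_eq_rd_self, h.mul_rd_self]

theorem rd_mul_eq_mul_ld_self (h : WithLoopIdentity mul ld rd) (x y : S) :
    rd (mul x y) y = mul x (ld y y) := by
  rw [h.mul_ld_self, h.mul_rd_eq_rd_mul]

theorem mul_mul_ld_self (h : WithLoopIdentity mul ld rd) (x y z : S) :
    mul (mul x y) (ld z z) = mul x (mul y (ld z z)) := by
  rw [h.mul_ld_self, h.mul_ld_self y, h.mul_rd_mul_assoc]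

theorem ld_mul_ld_self (h : WithLoopIdentity mul ld rd) (x w z : S) :
    ld x (mul w (ld z z)) = mul (ld x w) (ld z z) := by
  rw [h.mul_ld_self, h.mul_ld_self, h.ld_mul_rd_mul]

theorem mul_ld_self_eq_self_iff (h : WithLoopIdentity mul ld rd) (p y : S) :
    mul p (ld y y) = p ↔ ld p p = ld y y := by
  constructor
  · intro hp
    simpa only [hp] using h.ld_mul p (ld y y)
  · intro hp
    rw [← hp, h.mul_ld]

theorem ld_self_mul_self (h : WithLoopIdentity mul ld rd) (x y : S) :
    ld (mul x y) (mul x y) = ld y y :=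
  (h.mul_ld_self_eq_self_iff _ y).1 (by rw [h.mul_mul_ld_self, h.mul_ld])

theorem ld_self_ld (h : WithLoopIdentity mul ld rd) (x y : S) :
    ld (ld x y) (ld x y) = ld y y :=
  (h.mul_ld_self_eq_self_iff _ y).1 (by rw [← h.ld_mul_ld_self, h.mul_ld])

theorem ld_self_rd (h : WithLoopIdentity mul ld rd) (x y : S) :
    ld (rd x y) (rd x y) = ld y y :=
  (h.mul_ld_self_eq_self_iff _ y).1 (by rw [h.mul_ld_self, h.mul_rd_rd_mul])

theorem rd_mul_ld_self_left (h : WithLoopIdentity mul ld rd) (x z w : S) :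
    rd (mul x (ld z z)) w = rd x w := by
  rw [h.mul_ld_self, h.rd_mul_rd]

theorem mul_ld_self_mul (h : WithLoopIdentity mul ld rd) (x z y : S) :
    mul (mul x (ld z z)) y = mul x y := by
  have hrd : rd (mul (mul x (ld z z)) y) y = rd (mul x y) y := by
    rw [← h.mul_rd_eq_rd_mul, h.rd_mul_ld_self_left, h.mul_rd_eq_rd_mul]
  calc mul (mul x (ld z z)) y
      = mul (mul (mul x (ld z z)) y) (ld y y) := by rw [h.mul_mul_ld_self, h.mul_ld]
    _ = mul (mul x y) (ld y y) := by rw [h.mul_ld_self, hrd, ← h.mul_ld_self]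
    _ = mul x y := by rw [h.mul_mul_ld_self, h.mul_ld]

theorem ld_mul_ld_self_left (h : WithLoopIdentity mul ld rd) (x z y : S) :
    ld (mul x (ld z z)) y = ld x y := by
  calc ld (mul x (ld z z)) y = ld (mul x (ld z z)) (mul (mul x (ld z z)) (ld x y)) := by
        rw [h.mul_ld_self_mul, h.mul_ld]
    _ = ld x y := h.ld_mul _ _

theorem rd_mul_ld_self_right (h : WithLoopIdentity mul ld rd) (x y z : S) :
    rd x (mul y (ld z z)) = mul (rd x y) (ld z z) := by
  set v := mul y (ld z z)
  have hv : ld v v = ld z z := (h.ld_self_mul_self y _).trans (h.ld_self_ld z z)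
  have hcancel : ∀ t, ld t t = ld z z → rd (mul t v) v = t := fun t ht => by
    rw [h.rd_mul_eq_mul_ld_self, hv, (h.mul_ld_self_eq_self_iff t z).2 ht]
  calc rd x v
      = rd (mul (rd x v) v) v := (hcancel _ ((h.ld_self_rd x v).trans hv)).symm
    _ = rd (mul (mul (rd x y) (ld z z)) v) v := by
        rw [← h.mul_ld_self, hv, h.mul_ld_self_mul, ← h.mul_mul_ld_self, ← h.mul_ld_self,
          h.mul_ld_self_mul]
    _ = mul (rd x y) (ld z z) :=
        hcancel _ ((h.ld_self_mul_self _ _).trans (h.ld_self_ld z z))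

theorem isRightProductLoop (h : WithLoopIdentity mul ld rd) (a : S) :
    IsRightProductLoop mul ld rd := by
  have mem_fibre {x : S} (hx : ld x x = ld a a) : mul x (ld a a) = x :=
    (h.mul_ld_self_eq_self_iff x a).2 hx
  refine ⟨{x : S // ld x x = ld a a}, {r : S // ld r r = r},
    fun u v => ⟨mul u v, (h.ld_self_mul_self u v).trans v.2⟩,
    fun u v => ⟨ld u v, (h.ld_self_ld u v).trans v.2⟩,
    fun u v => ⟨rd u v, (h.ld_self_rd u v).trans v.2⟩,
    fun _ r => r, fun _ r => r, fun _ r => r,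
    fun x => (⟨mul x (ld a a), (h.ld_self_mul_self x _).trans (h.ld_self_ld a a)⟩,
      ⟨ld x x, h.ld_self_ld x x⟩),
    fun u v => Subtype.ext (h.ld_mul u v), fun u v => Subtype.ext (h.mul_ld u v),
    fun u v => Subtype.ext ?_, fun u v => Subtype.ext ?_,
    fun u v => Subtype.ext (u.2.trans (v.2.symm.trans (h.ld_self_eq_rd_self v))),
    fun _ _ => rfl, fun _ _ => rfl, fun _ _ => rfl, ?_,
    fun x y => Prod.ext (Subtype.ext ?_) (Subtype.ext (h.ld_self_mul_self x y)),
    fun x y => Prod.ext (Subtype.ext ?_) (Subtype.ext (h.ld_self_ld x y)),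
    fun x y => Prod.ext (Subtype.ext ?_) (Subtype.ext (h.ld_self_rd x y))⟩
  · show rd (mul u v) v = u
    rw [h.rd_mul_eq_mul_ld_self, v.2, mem_fibre u.2]
  · show mul (rd u v) v = u
    rw [← h.mul_ld_self, v.2, mem_fibre u.2]
  · refine Function.bijective_iff_has_inverse.mpr ⟨fun p => mul p.1.1 p.2.1, fun x => ?_, ?_⟩
    · show mul (mul x (ld a a)) (ld x x) = x
      rw [h.mul_ld_self_mul, h.mul_ld]
    · rintro ⟨q, r⟩
      refine Prod.ext (Subtype.ext ?_) (Subtype.ext ((h.ld_self_mul_self q.1 r.1).trans r.2))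
      show mul (mul q.1 r.1) (ld a a) = q.1
      rw [h.mul_mul_ld_self, ← r.2, h.ld_self_mul, mem_fibre q.2]
  · show mul (mul x y) (ld a a) = mul (mul x (ld a a)) (mul y (ld a a))
    rw [h.mul_ld_self_mul, h.mul_mul_ld_self]
  · show mul (ld x y) (ld a a) = ld (mul x (ld a a)) (mul y (ld a a))
    rw [h.ld_mul_ld_self_left, h.ld_mul_ld_self]
  · show mul (rd x y) (ld a a) = rd (mul x (ld a a)) (mul y (ld a a))
    rw [h.rd_mul_ld_self_left, h.rd_mul_ld_self_right]

end SystemA_s9.WithLoopIdentity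

/-- An algebra satisfying system (A) satisfies `(x\x)·y = y` iff it is a
right product loop: there exist a loop `Q` (a quasigroup with `x\x = y/y`),
a right zero semigroup `R` and an operation-preserving bijection `f : S → Q × R`. -/
theorem systemA_loopIdentity_iff_rightProductLoop {S : Type u}
    (mul ld rd : S → S → S)
    (A1 : ∀ x y : S, ld x (mul x y) = y)
    (A2 : ∀ x y : S, mul x (ld x y) = y)
    (A3 : ∀ x y : S, mul (rd x y) y = rd (mul x y) y)
    (A4 : ∀ x y z : S, rd (mul (rd x y) y) z = rd x z)
    (A5 : ∀ x y z : S, mul (rd (mul x y) z) z = mul x (mul (rd y z) z)) :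
    (∀ x y : S, mul (ld x x) y = y)
    ↔
    ∃ (Q : Type u) (R : Type u) (mQ lQ rQ : Q → Q → Q) (mR lR rR : R → R → R)
      (f : S → Q × R),
      (∀ x y, lQ x (mQ x y) = y) ∧
      (∀ x y, mQ x (lQ x y) = y) ∧
      (∀ x y, rQ (mQ x y) y = x) ∧
      (∀ x y, mQ (rQ x y) y = x) ∧
      (∀ x y, lQ x x = rQ y y) ∧
      (∀ x y, mR x y = y) ∧ (∀ x y, lR x y = y) ∧ (∀ x y, rR x y = y) ∧
      Function.Bijective f ∧
      (∀ x y, f (mul x y) = (mQ (f x).1 (f y).1, mR (f x).2 (f y).2)) ∧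
      (∀ x y, f (ld x y) = (lQ (f x).1 (f y).1, lR (f x).2 (f y).2)) ∧
      (∀ x y, f (rd x y) = (rQ (f x).1 (f y).1, rR (f x).2 (f y).2)) := by
  refine ⟨fun hL => ?_, IsRightProductLoop.ld_self_mul⟩
  rcases isEmpty_or_nonempty S with hS | ⟨⟨a⟩⟩
  · exact IsRightProductLoop.of_isEmpty
  · exact SystemA_s9.WithLoopIdentity.isRightProductLoop ⟨⟨A1, A2, A3, A4, A5⟩, hL⟩ a
end

section
/- An algebra (S; ·, \, /) satisfies system (A) together with the associative law x·(y·z) = (x·y)·z if and only if S is a right group: there exist a group G, a right zero semigroup R, and a bijection f : S → G × R preserving each of the operations ·, \ and /, where G is regarded as an algebra with its group multiplication, x \ y := x⁻¹·y and x/y := x·y⁻¹, and the product carries componentwise operations. -/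
/-!
Associativity together with (A1) and (A2) makes `S` a left cancellative semigroup in which
every equation `x · z = y` is solvable, i.e. a right group. Fix an idempotent `e` (say `x \ x`).
Then `S e = {g | g · e = g}` is a group with identity `e` and `g⁻¹ = (g \ e) · e`, every
idempotent is a left identity, and `x ↦ (x · e, x \ x)` is an isomorphism of `S` onto
`S e × E(S)`, the second factor being right zero.

For the right division, write `π x = x · e`. (A5) makes `π ((x · y) / z) = π x · π (y / z)`,
so by (A4) `π (y / y)` is an idempotent of the group, hence `e`, and then (A3) gives
`π (x / y) · π y = π x`. Finally `x / y = ((x / y) / y) · y`, so `(x / y) \ (x / y) = y \ y`.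
-/

universe u

open Function

variable {S : Type u}

structure IsLeftDiv [Mul S] (ld : S → S → S) : Prop where
  ld_mul : ∀ x y, ld x (x * y) = y
  mul_ld : ∀ x y, x * ld x y = y

/-- System (A), with (A1) and (A2) as the fields of `IsLeftDiv`. -/
structure IsSystemA_s10 [Mul S] (ld rd : S → S → S) : Prop extends IsLeftDiv ld where
  rd_mul_comm : ∀ x y, rd x y * y = rd (x * y) y
  rd_rd_mul : ∀ x y z, rd (rd x y * y) z = rd x z
  rd_mul_mul_assoc : ∀ x y z, rd (x * y) z * z = x * (rd y z * z)

namespace IsLeftDiv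

section Mul

variable [Mul S] {ld : S → S → S}

theorem mul_left_cancel (h : IsLeftDiv ld) {x u v : S} (huv : x * u = x * v) : u = v := by
  rw [← h.ld_mul x u, huv, h.ld_mul]

theorem ld_self_eq (h : IsLeftDiv ld) {x t : S} (hxt : x * t = x) : ld x x = t := by
  simpa only [hxt] using h.ld_mul x t

end Mul

variable [Semigroup S] {ld : S → S → S}

theorem isIdempotentElem_ld_self (h : IsLeftDiv ld) (x : S) : IsIdempotentElem (ld x x) :=
  h.mul_left_cancel (x := x) (by rw [← mul_assoc, h.mul_ld, h.mul_ld])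

theorem mul_eq_right_of_isIdempotentElem (h : IsLeftDiv ld) {e : S} (he : IsIdempotentElem e)
    (y : S) : e * y = y :=
  h.mul_left_cancel (x := e) (by rw [← mul_assoc, he.eq])

theorem ld_self_mul (h : IsLeftDiv ld) (x y : S) : ld (x * y) (x * y) = ld y y :=
  h.ld_self_eq (by rw [mul_assoc, h.mul_ld])

theorem ld_self_ld (h : IsLeftDiv ld) (x y : S) : ld (ld x y) (ld x y) = ld y y := by
  simpa only [h.mul_ld] using (h.ld_self_mul x (ld x y)).symm

/-- The left ideal `S e`; it depends on `h` and `he` only so that its group structure can be an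
instance. -/
def GroupAt (_h : IsLeftDiv ld) {e : S} (_he : IsIdempotentElem e) : Type u := {g : S // g * e = g}

variable {e : S} (h : IsLeftDiv ld) (he : IsIdempotentElem e)

instance : Mul (h.GroupAt he) := ⟨fun g k => ⟨g.1 * k.1, by rw [mul_assoc, k.2]⟩⟩

instance : One (h.GroupAt he) := ⟨⟨e, he⟩⟩

instance : Inv (h.GroupAt he) := ⟨fun g => ⟨ld g.1 e * e, by rw [mul_assoc, he.eq]⟩⟩

instance : Group (h.GroupAt he) :=
  Group.ofRightAxioms (fun _ _ _ => Subtype.ext (mul_assoc _ _ _)) (fun g => Subtype.ext g.2)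
    (fun g => Subtype.ext (show g.1 * (ld g.1 e * e) = e by rw [← mul_assoc, h.mul_ld, he.eq]))

def toGroupAt (x : S) : h.GroupAt he := ⟨x * e, by rw [mul_assoc, he.eq]⟩

theorem toGroupAt_mul (x y : S) :
    h.toGroupAt he (x * y) = h.toGroupAt he x * h.toGroupAt he y :=
  Subtype.ext <| show x * y * e = x * e * (y * e) by
    rw [mul_assoc x e, h.mul_eq_right_of_isIdempotentElem he, mul_assoc]

theorem toGroupAt_ld (x y : S) :
    h.toGroupAt he (ld x y) = (h.toGroupAt he x)⁻¹ * h.toGroupAt he y :=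
  eq_inv_mul_of_mul_eq (by rw [← toGroupAt_mul, h.mul_ld])

def equivProd : S ≃ h.GroupAt he × {r : S // IsIdempotentElem r} where
  toFun x := (h.toGroupAt he x, ⟨ld x x, h.isIdempotentElem_ld_self x⟩)
  invFun p := p.1.1 * p.2.1
  left_inv x := show x * e * ld x x = x by
    rw [mul_assoc, h.mul_eq_right_of_isIdempotentElem he, h.mul_ld]
  right_inv := fun ⟨g, r⟩ => Prod.ext
    (Subtype.ext <| show g.1 * r.1 * e = g.1 by
      rw [mul_assoc, h.mul_eq_right_of_isIdempotentElem r.2, g.2])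
    (Subtype.ext <| show ld (g.1 * r.1) (g.1 * r.1) = r.1 by
      rw [h.ld_self_mul, h.ld_self_eq r.2.eq])

end IsLeftDiv

namespace IsSystemA_s10

variable [Semigroup S] {ld rd : S → S → S}

theorem rd_eq_mul (h : IsSystemA_s10 ld rd) (x y : S) : rd x y = rd (rd x y) y * y := by
  rw [h.rd_mul_comm, h.rd_rd_mul]

theorem ld_self_rd (h : IsSystemA_s10 ld rd) (x y : S) : ld (rd x y) (rd x y) = ld y y := by
  rw [h.rd_eq_mul x y, h.ld_self_mul]

section GroupAt

variable {e : S} (h : IsSystemA_s10 ld rd) (he : IsIdempotentElem e)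

local notation "π" => h.toIsLeftDiv.toGroupAt he

theorem toGroupAt_rd_mul (x y z : S) : π (rd (x * y) z) = π x * π (rd y z) := by
  apply mul_right_cancel (b := π z)
  simpa only [← IsLeftDiv.toGroupAt_mul, mul_assoc] using congrArg π (h.rd_mul_mul_assoc x y z)

theorem toGroupAt_rd_self (y : S) : π (rd y y) = 1 := by
  have hidem := h.toGroupAt_rd_mul he (rd y y) y y
  rwa [h.rd_rd_mul, left_eq_mul] at hidem

theorem toGroupAt_rd (x y : S) : π (rd x y) = π x * (π y)⁻¹ := by
  refine eq_mul_inv_of_mul_eq ?_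
  rw [← IsLeftDiv.toGroupAt_mul, h.rd_mul_comm, h.toGroupAt_rd_mul, h.toGroupAt_rd_self, mul_one]

end GroupAt

theorem exists_equiv_prod (h : IsSystemA_s10 ld rd) :
    ∃ (G R : Type u) (_ : Group G) (f : S ≃ G × R), ∀ x y,
      f (x * y) = ((f x).1 * (f y).1, (f y).2) ∧
      f (ld x y) = ((f x).1⁻¹ * (f y).1, (f y).2) ∧
      f (rd x y) = ((f x).1 * (f y).1⁻¹, (f y).2) := by
  rcases isEmpty_or_nonempty S with _ | ⟨⟨a⟩⟩
  · exact ⟨PUnit, S, inferInstance, (Equiv.punitProd S).symm, isEmptyElim⟩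
  · have he := h.isIdempotentElem_ld_self a
    exact ⟨_, _, inferInstance, h.equivProd he, fun x y =>
      ⟨Prod.ext (h.toGroupAt_mul he x y) (Subtype.ext (h.ld_self_mul x y)),
        Prod.ext (h.toGroupAt_ld he x y) (Subtype.ext (h.ld_self_ld x y)),
        Prod.ext (h.toGroupAt_rd he x y) (Subtype.ext (h.ld_self_rd x y))⟩⟩

end IsSystemA_s10

section RightGroup

variable [Mul S] {ld rd : S → S → S} {G R : Type*} {f : S → G × R}

theorem mul_assoc_of_injective_prod [Semigroup G] (hf : Injective f)
    (hmul : ∀ x y, f (x * y) = ((f x).1 * (f y).1, (f y).2)) (x y z : S) :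
    x * (y * z) = x * y * z :=
  hf (by simp only [hmul, mul_assoc])

theorem isSystemA_of_injective_prod [Group G] (hf : Injective f)
    (hmul : ∀ x y, f (x * y) = ((f x).1 * (f y).1, (f y).2))
    (hld : ∀ x y, f (ld x y) = ((f x).1⁻¹ * (f y).1, (f y).2))
    (hrd : ∀ x y, f (rd x y) = ((f x).1 * (f y).1⁻¹, (f y).2)) : IsSystemA_s10 ld rd where
  ld_mul x y := hf (by simp only [hmul, hld, inv_mul_cancel_left])
  mul_ld x y := hf (by simp only [hmul, hld, mul_inv_cancel_left])
  rd_mul_comm x y := hf (by simp only [hmul, hrd, inv_mul_cancel_right, mul_inv_cancel_right])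
  rd_rd_mul x y z := hf (by simp only [hmul, hrd, inv_mul_cancel_right])
  rd_mul_mul_assoc x y z := hf (by simp only [hmul, hrd, inv_mul_cancel_right])

end RightGroup

/-- An algebra `(S; ·, \, /)` satisfies system (A) together with
associativity iff it is a right group: there exist a group `G` (given by its
multiplication, inversion and identity), a right zero semigroup `R` and an
operation-preserving bijection `f : S → G × R`, where `G` carries `x\y = x⁻¹·y` and
`x/y = x·y⁻¹` and the product carries componentwise operations. -/
theorem systemA_assoc_iff_rightGroup {S : Type u} (mul ld rd : S → S → S) :
    ((∀ x y : S, ld x (mul x y) = y) ∧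
     (∀ x y : S, mul x (ld x y) = y) ∧
     (∀ x y : S, mul (rd x y) y = rd (mul x y) y) ∧
     (∀ x y z : S, rd (mul (rd x y) y) z = rd x z) ∧
     (∀ x y z : S, mul (rd (mul x y) z) z = mul x (mul (rd y z) z)) ∧
     (∀ x y z : S, mul x (mul y z) = mul (mul x y) z))
    ↔
    ∃ (G : Type u) (R : Type u) (mG : G → G → G) (invG : G → G) (eG : G)
      (mR lR rR : R → R → R) (f : S → G × R),
      (∀ x y z, mG (mG x y) z = mG x (mG y z)) ∧
      (∀ x, mG eG x = x) ∧ (∀ x, mG x eG = x) ∧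
      (∀ x, mG (invG x) x = eG) ∧ (∀ x, mG x (invG x) = eG) ∧
      (∀ x y, mR x y = y) ∧ (∀ x y, lR x y = y) ∧ (∀ x y, rR x y = y) ∧
      Function.Bijective f ∧
      (∀ x y, f (mul x y) = (mG (f x).1 (f y).1, mR (f x).2 (f y).2)) ∧
      (∀ x y, f (ld x y) = (mG (invG (f x).1) (f y).1, lR (f x).2 (f y).2)) ∧
      (∀ x y, f (rd x y) = (mG (f x).1 (invG (f y).1), rR (f x).2 (f y).2)) := by
  constructor
  · rintro ⟨A1, A2, A3, A4, A5, assoc⟩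
    let _ : Semigroup S := { mul, mul_assoc := fun x y z => (assoc x y z).symm }
    have h : IsSystemA_s10 ld rd := ⟨⟨A1, A2⟩, A3, A4, A5⟩
    obtain ⟨G, R, _, f, hf⟩ := h.exists_equiv_prod
    exact ⟨G, R, (· * ·), (·⁻¹), 1, fun _ y => y, fun _ y => y, fun _ y => y, f, mul_assoc,
      one_mul, mul_one, inv_mul_cancel, mul_inv_cancel, fun _ _ => rfl, fun _ _ => rfl,
      fun _ _ => rfl, f.bijective, fun x y => (hf x y).1, fun x y => (hf x y).2.1,
      fun x y => (hf x y).2.2⟩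
  · rintro ⟨G, R, mG, invG, eG, mR, lR, rR, f, hGa, hG1, hG2, hG3, -, hmR, hlR, hrR, hf,
      hfm, hfl, hfr⟩
    let _ : Group G :=
      { mul := mG, one := eG, inv := invG, mul_assoc := hGa, one_mul := hG1, mul_one := hG2,
        inv_mul_cancel := hG3 }
    let _ : Mul S := ⟨mul⟩
    simp only [hmR, hlR, hrR] at hfm hfl hfr
    have h : IsSystemA_s10 ld rd := isSystemA_of_injective_prod hf.1 hfm hfl hfr
    exact ⟨h.ld_mul, h.mul_ld, h.rd_mul_comm, h.rd_rd_mul, h.rd_mul_mul_assoc,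
      mul_assoc_of_injective_prod hf.1 hfm⟩
end

section
/- Let (S; ·, \, /) be an algebra satisfying system (A) in which the multiplication is commutative: x·y = y·x for all x, y. Then S is a quasigroup; in particular (x·y)/y = x and (x/y)·y = x hold for all x, y. -/
/-! Commutativity and (A5) make `x·((y/z)·z)` symmetric in `x` and `y`. Taking `y = q := (x/z)·z`,
which (A4) shows to be fixed by `u ↦ (u/z)·z`, gives `x·q = q·q`, hence `q·x = q·q`, and left
cancellation (A1) yields `q = x`. Then `(x·y)/y = (x/y)·y = x` by (A3). -/

section SystemA

variable {S : Type*} {mul ld rd : S → S → S}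

theorem mul_mul_rd_mul_comm (A5 : ∀ x y z : S, mul (rd (mul x y) z) z = mul x (mul (rd y z) z))
    (comm : ∀ x y : S, mul x y = mul y x) (x y z : S) :
    mul x (mul (rd y z) z) = mul y (mul (rd x z) z) := by
  rw [← A5, comm x y, A5]

theorem rd_mul_cancel_of_comm (A1 : ∀ x y : S, ld x (mul x y) = y)
    (A4 : ∀ x y z : S, rd (mul (rd x y) y) z = rd x z)
    (A5 : ∀ x y z : S, mul (rd (mul x y) z) z = mul x (mul (rd y z) z))
    (comm : ∀ x y : S, mul x y = mul y x) (x z : S) :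
    mul (rd x z) z = x := by
  set q := mul (rd x z) z with hq
  have hq_fixed : mul (rd q z) z = q := by rw [hq, A4]
  have hxq : mul x q = mul q q := by
    simpa only [hq_fixed] using mul_mul_rd_mul_comm A5 comm x q z
  calc q = ld q (mul q q) := (A1 q q).symm
    _ = ld q (mul q x) := by rw [← hxq, comm x q]
    _ = x := A1 q x

theorem mul_rd_cancel_of_comm (A1 : ∀ x y : S, ld x (mul x y) = y)
    (A3 : ∀ x y : S, mul (rd x y) y = rd (mul x y) y)
    (A4 : ∀ x y z : S, rd (mul (rd x y) y) z = rd x z)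
    (A5 : ∀ x y z : S, mul (rd (mul x y) z) z = mul x (mul (rd y z) z))
    (comm : ∀ x y : S, mul x y = mul y x) (x y : S) :
    rd (mul x y) y = x := by
  rw [← A3, rd_mul_cancel_of_comm A1 A4 A5 comm]

end SystemA

/-- An algebra satisfying system (A) with commutative multiplication is a
quasigroup; in particular `(x·y)/y = x` and `(x/y)·y = x`. -/
theorem systemA_comm_implies_quasigroup {S : Type*} (mul ld rd : S → S → S)
    (A1 : ∀ x y : S, ld x (mul x y) = y)
    (A2 : ∀ x y : S, mul x (ld x y) = y)
    (A3 : ∀ x y : S, mul (rd x y) y = rd (mul x y) y)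
    (A4 : ∀ x y z : S, rd (mul (rd x y) y) z = rd x z)
    (A5 : ∀ x y z : S, mul (rd (mul x y) z) z = mul x (mul (rd y z) z))
    (comm : ∀ x y : S, mul x y = mul y x) :
    (∀ x y : S, ld x (mul x y) = y) ∧
    (∀ x y : S, mul x (ld x y) = y) ∧
    (∀ x y : S, rd (mul x y) y = x) ∧
    (∀ x y : S, mul (rd x y) y = x) :=
  ⟨A1, A2, mul_rd_cancel_of_comm A1 A3 A4 A5 comm, rd_mul_cancel_of_comm A1 A4 A5 comm⟩
end

section
/- Let (S; ·, \, /) be an algebra satisfying system (A), and let a, b ∈ S. Then the equation x·a = b has a solution x ∈ S if and only if (b/a)·a = b. -/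
/-! Every product `x·a` is fixed by `y ↦ (y/a)·a`: by (A5), `((x·a)/a)·a = x·((a/a)·a)`, and
`(a/a)·a = a` because (A4) turns the instance `x = a/a, y = z = a` of (A5) into
`(a/a)·a = (a/a)·((a/a)·a)`, from which (A1) cancels `a/a` on the left. -/

section

variable {S : Type*} {mul ld rd : S → S → S}

theorem mul_rd_self_mul_self (A1 : ∀ x y : S, ld x (mul x y) = y)
    (A4 : ∀ x y z : S, rd (mul (rd x y) y) z = rd x z)
    (A5 : ∀ x y z : S, mul (rd (mul x y) z) z = mul x (mul (rd y z) z)) (a : S) :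
    mul (rd a a) a = a := by
  have hcancel : Function.Injective (mul (rd a a)) :=
    Function.LeftInverse.injective (A1 (rd a a))
  apply hcancel
  rw [← A5, A4]

theorem mul_rd_mul_of_mul (A1 : ∀ x y : S, ld x (mul x y) = y)
    (A4 : ∀ x y z : S, rd (mul (rd x y) y) z = rd x z)
    (A5 : ∀ x y z : S, mul (rd (mul x y) z) z = mul x (mul (rd y z) z)) (x a : S) :
    mul (rd (mul x a) a) a = mul x a := by
  rw [A5, mul_rd_self_mul_self A1 A4 A5]

end

theorem eq_xa_b_consistent_iff_general {S : Type*} (mul ld rd : S → S → S)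
    (A1 : ∀ x y : S, ld x (mul x y) = y)
    (A4 : ∀ x y z : S, rd (mul (rd x y) y) z = rd x z)
    (A5 : ∀ x y z : S, mul (rd (mul x y) z) z = mul x (mul (rd y z) z))
    (a b : S) :
    (∃ x : S, mul x a = b) ↔ mul (rd b a) a = b := by
  constructor
  · rintro ⟨x, rfl⟩
    exact mul_rd_mul_of_mul A1 A4 A5 x a
  · intro h
    exact ⟨rd b a, h⟩

/-- In an algebra satisfying system (A), the equation `x·a = b` has a
solution iff `(b/a)·a = b`. -/
theorem eq_xa_b_consistent_iff {S : Type*} (mul ld rd : S → S → S)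
    (A1 : ∀ x y : S, ld x (mul x y) = y)
    (A2 : ∀ x y : S, mul x (ld x y) = y)
    (A3 : ∀ x y : S, mul (rd x y) y = rd (mul x y) y)
    (A4 : ∀ x y z : S, rd (mul (rd x y) y) z = rd x z)
    (A5 : ∀ x y z : S, mul (rd (mul x y) z) z = mul x (mul (rd y z) z))
    (a b : S) :
    (∃ x : S, mul x a = b) ↔ mul (rd b a) a = b :=
  eq_xa_b_consistent_iff_general mul ld rd A1 A4 A5 a b
end

section
/- Let (S; ·, \, /) be an algebra satisfying system (A) together with the identity (x/x)·y = y (i.e., S is a right product left loop), and let a, b ∈ S. Then the equation x·a = b has a solution x ∈ S if and only if a/a = b/b. -/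
/-!
Read `S` as `L × R` with `L` a left loop and `R` a right zero semigroup. Then `(t/z)·z` keeps the
`L`-component of `t` and takes the `R`-component of `z`, while `z/z = (1, z_R)`. So both sides of the
equivalence say that `a` and `b` have the same `R`-component. Equationally, the role of `z_R` is
played by the map `t ↦ (t/z)·z`, which determines `z/z` and is determined by it.
-/

section RightProductLeftLoop

variable {S : Type*} (mul rd : S → S → S)

def divMul (z t : S) : S := mul (rd t z) z

variable {mul rd}

theorem divMul_eq_of_divMul_eq_self
    (A4 : ∀ x y z : S, rd (mul (rd x y) y) z = rd x z)
    (A5 : ∀ x y z : S, mul (rd (mul x y) z) z = mul x (mul (rd y z) z))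
    {z q : S} (h : divMul mul rd z q = q) : divMul mul rd q = divMul mul rd z := by
  funext t
  calc divMul mul rd q t = mul (rd t q) (divMul mul rd z q) := by rw [h]; rfl
    _ = mul (rd (mul (rd t q) q) z) z := (A5 _ _ _).symm
    _ = divMul mul rd z t := by rw [A4]; rfl

theorem divMul_mul_self
    (A5 : ∀ x y z : S, mul (rd (mul x y) z) z = mul x (mul (rd y z) z))
    (LL : ∀ x y : S, mul (rd x x) y = y) (x y : S) :
    divMul mul rd y (mul x y) = mul x y := by
  rw [divMul, A5, LL]

theorem divMul_rd_self
    (A3 : ∀ x y : S, mul (rd x y) y = rd (mul x y) y)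
    (LL : ∀ x y : S, mul (rd x x) y = y) (z : S) :
    divMul mul rd z (rd z z) = rd z z := by
  rw [divMul, A3, LL]

theorem rd_rd_self_eq_rd_rd_self
    (A3 : ∀ x y : S, mul (rd x y) y = rd (mul x y) y)
    (A4 : ∀ x y z : S, rd (mul (rd x y) y) z = rd x z)
    (LL : ∀ x y : S, mul (rd x x) y = y) (w y z : S) :
    rd (rd y y) z = rd (rd w w) z := by
  simpa only [A3, LL] using A4 (rd w w) y z

theorem rd_self_eq_divMul_rd_self
    (A3 : ∀ x y : S, mul (rd x y) y = rd (mul x y) y)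
    (A4 : ∀ x y z : S, rd (mul (rd x y) y) z = rd x z)
    (LL : ∀ x y : S, mul (rd x x) y = y) (w z : S) :
    rd z z = divMul mul rd z (rd w w) := by
  rw [divMul, rd_rd_self_eq_rd_rd_self A3 A4 LL z w z]
  exact (divMul_rd_self A3 LL z).symm

theorem rd_self_eq_rd_self_iff_divMul_eq
    (A3 : ∀ x y : S, mul (rd x y) y = rd (mul x y) y)
    (A4 : ∀ x y z : S, rd (mul (rd x y) y) z = rd x z)
    (A5 : ∀ x y z : S, mul (rd (mul x y) z) z = mul x (mul (rd y z) z))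
    (LL : ∀ x y : S, mul (rd x x) y = y) (z q : S) :
    rd z z = rd q q ↔ divMul mul rd z = divMul mul rd q := by
  have divMul_eq_divMul_rd_self (z : S) : divMul mul rd (rd z z) = divMul mul rd z :=
    divMul_eq_of_divMul_eq_self A4 A5 (divMul_rd_self A3 LL z)
  constructor
  · intro h
    rw [← divMul_eq_divMul_rd_self z, h, divMul_eq_divMul_rd_self]
  · intro h
    rw [rd_self_eq_divMul_rd_self A3 A4 LL z z, h, ← rd_self_eq_divMul_rd_self A3 A4 LL z q]

end RightProductLeftLoop

theorem eq_xa_b_consistent_iff_leftLoop_general {S : Type*} (mul rd : S → S → S)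
    (A3 : ∀ x y : S, mul (rd x y) y = rd (mul x y) y)
    (A4 : ∀ x y z : S, rd (mul (rd x y) y) z = rd x z)
    (A5 : ∀ x y z : S, mul (rd (mul x y) z) z = mul x (mul (rd y z) z))
    (LL : ∀ x y : S, mul (rd x x) y = y)
    (a b : S) :
    (∃ x : S, mul x a = b) ↔ rd a a = rd b b := by
  rw [rd_self_eq_rd_self_iff_divMul_eq A3 A4 A5 LL]
  constructor
  · rintro ⟨x, rfl⟩
    exact (divMul_eq_of_divMul_eq_self A4 A5 (divMul_mul_self A5 LL x a)).symm
  · intro h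
    refine ⟨rd b a, ?_⟩
    calc mul (rd b a) a = divMul mul rd b b := congrFun h b
      _ = b := LL b b

/-- In an algebra satisfying system (A) together with `(x/x)·y = y`
(a right product left loop), the equation `x·a = b` has a solution iff `a/a = b/b`. -/
theorem eq_xa_b_consistent_iff_leftLoop {S : Type*} (mul ld rd : S → S → S)
    (A1 : ∀ x y : S, ld x (mul x y) = y)
    (A2 : ∀ x y : S, mul x (ld x y) = y)
    (A3 : ∀ x y : S, mul (rd x y) y = rd (mul x y) y)
    (A4 : ∀ x y z : S, rd (mul (rd x y) y) z = rd x z)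
    (A5 : ∀ x y z : S, mul (rd (mul x y) z) z = mul x (mul (rd y z) z))
    (LL : ∀ x y : S, mul (rd x x) y = y)
    (a b : S) :
    (∃ x : S, mul x a = b) ↔ rd a a = rd b b :=
  eq_xa_b_consistent_iff_leftLoop_general mul rd A3 A4 A5 LL a b
end

section
/- Let (S; ·, \, /) be an algebra satisfying system (A), let a, b ∈ S, and suppose the equation x·a = b is consistent, i.e., (b/a)·a = b. Define F : S → S by F(x) := ((b/a)·x)/x. Then: (i) F(F(x)) = F(x) for all x ∈ S (the equation x = F(x) is reproductive); (ii) for every p ∈ S, F(p)·a = b; and (iii) every x ∈ S with x·a = b satisfies x = F(x). In particular the solution set of x·a = b is exactly { ((b/a)·p)/p : p ∈ S }. -/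
/-! The right divisions `y / a` and `z / a` determine the products `y·a` and `z·a`,
and every `F p` has the same right quotient by `a` as `b / a`; hence `F p · a = b`.
Conversely, for a solution `x` the identities collapse `F x` to `(x/x)·x = x`.
Reproductivity follows by applying the second fact to the solution `F x`. -/

section SystemA

variable {S : Type*} {mul ld rd : S → S → S}

theorem mul_left_cancel_of_ld_mul (A1 : ∀ x y : S, ld x (mul x y) = y)
    {u v w : S} (h : mul u v = mul u w) : v = w := by
  rw [← A1 u v, h, A1]

-- `u := (x/x)·x` satisfies `u/x = x/x` and `(u·x)/x = u`, so A5 gives `u·u = u·x`.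
theorem mul_rd_self_self (A1 : ∀ x y : S, ld x (mul x y) = y)
    (A3 : ∀ x y : S, mul (rd x y) y = rd (mul x y) y)
    (A4 : ∀ x y z : S, rd (mul (rd x y) y) z = rd x z)
    (A5 : ∀ x y z : S, mul (rd (mul x y) z) z = mul x (mul (rd y z) z)) (x : S) :
    mul (rd x x) x = x := by
  set u := mul (rd x x) x
  have hux : rd (mul u x) x = u := by rw [← A3, A4]
  have huu : mul u u = mul u x := by
    have := A5 u x x
    rwa [hux, eq_comm] at this
  exact mul_left_cancel_of_ld_mul A1 huu

theorem mul_eq_mul_of_rd_eq_rd (A1 : ∀ x y : S, ld x (mul x y) = y)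
    (A3 : ∀ x y : S, mul (rd x y) y = rd (mul x y) y)
    (A4 : ∀ x y z : S, rd (mul (rd x y) y) z = rd x z)
    (A5 : ∀ x y z : S, mul (rd (mul x y) z) z = mul x (mul (rd y z) z))
    {y z a : S} (h : rd y a = rd z a) : mul y a = mul z a := by
  have hmul : ∀ w, mul (rd (mul w a) a) a = mul w a := fun w => by
    rw [A5, mul_rd_self_self A1 A3 A4 A5]
  rw [← hmul y, ← hmul z, ← A3, ← A3, h]

theorem rd_rd_mul_rd (A3 : ∀ x y : S, mul (rd x y) y = rd (mul x y) y)
    (A4 : ∀ x y z : S, rd (mul (rd x y) y) z = rd x z) (c p a : S) :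
    rd (rd (mul c p) p) a = rd c a := by
  rw [← A3, A4]

theorem rd_mul_rd_mul_self (A1 : ∀ x y : S, ld x (mul x y) = y)
    (A3 : ∀ x y : S, mul (rd x y) y = rd (mul x y) y)
    (A4 : ∀ x y z : S, rd (mul (rd x y) y) z = rd x z)
    (A5 : ∀ x y z : S, mul (rd (mul x y) z) z = mul x (mul (rd y z) z)) (x a : S) :
    rd (mul (rd (mul x a) a) x) x = x := by
  rw [← A3, ← A3, A4, mul_rd_self_self A1 A3 A4 A5]

end SystemA

theorem reproductive_solution_general {S : Type*} (mul ld rd : S → S → S)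
    (A1 : ∀ x y : S, ld x (mul x y) = y)
    (A3 : ∀ x y : S, mul (rd x y) y = rd (mul x y) y)
    (A4 : ∀ x y z : S, rd (mul (rd x y) y) z = rd x z)
    (A5 : ∀ x y z : S, mul (rd (mul x y) z) z = mul x (mul (rd y z) z))
    (a b : S) (consistent : mul (rd b a) a = b)
    (F : S → S) (hF : ∀ x, F x = rd (mul (rd b a) x) x) :
    (∀ x : S, F (F x) = F x) ∧
    (∀ p : S, mul (F p) a = b) ∧
    (∀ x : S, mul x a = b → x = F x) ∧
    {x : S | mul x a = b} = {x : S | ∃ p : S, x = rd (mul (rd b a) p) p} := by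
  have solves : ∀ p, mul (F p) a = b := fun p =>
    (mul_eq_mul_of_rd_eq_rd A1 A3 A4 A5 (by rw [hF, rd_rd_mul_rd A3 A4])).trans consistent
  have fixes : ∀ x, mul x a = b → x = F x := by
    rintro x rfl
    rw [hF, rd_mul_rd_mul_self A1 A3 A4 A5]
  refine ⟨fun x => (fixes _ (solves x)).symm, solves, fixes, Set.ext fun x => ⟨?_, ?_⟩⟩
  · exact fun hx => ⟨x, (fixes x hx).trans (hF x)⟩
  · rintro ⟨p, rfl⟩
    exact hF p ▸ solves p

/-- In an algebra satisfying system (A), if `x·a = b` is consistent,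
i.e. `(b/a)·a = b`, then `F(x) := ((b/a)·x)/x` satisfies: (i) `F(F(x)) = F(x)` for all
`x` (reproductivity); (ii) `F(p)·a = b` for every `p`; (iii) every solution `x` of
`x·a = b` satisfies `x = F(x)`. In particular the solution set of `x·a = b` is exactly
`{ ((b/a)·p)/p : p ∈ S }`. -/
theorem reproductive_solution {S : Type*} (mul ld rd : S → S → S)
    (A1 : ∀ x y : S, ld x (mul x y) = y)
    (A2 : ∀ x y : S, mul x (ld x y) = y)
    (A3 : ∀ x y : S, mul (rd x y) y = rd (mul x y) y)
    (A4 : ∀ x y z : S, rd (mul (rd x y) y) z = rd x z)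
    (A5 : ∀ x y z : S, mul (rd (mul x y) z) z = mul x (mul (rd y z) z))
    (a b : S) (consistent : mul (rd b a) a = b)
    (F : S → S) (hF : ∀ x, F x = rd (mul (rd b a) x) x) :
    (∀ x : S, F (F x) = F x) ∧
    (∀ p : S, mul (F p) a = b) ∧
    (∀ x : S, mul x a = b → x = F x) ∧
    {x : S | mul x a = b} = {x : S | ∃ p : S, x = rd (mul (rd b a) p) p} :=
  reproductive_solution_general mul ld rd A1 A3 A4 A5 a b consistent F hF
end

section
/- Let (S; ·, \, /) be an algebra satisfying system (A) together with the identity (x \ x)·z = (y \ y)·z (i.e., S is a right product right loop), and let a, b ∈ S with a \ a = b \ b. Then for every idempotent e ∈ S (i.e., e·e = e) the element (b/a)·e satisfies ((b/a)·e)·a = b, and conversely every x ∈ S with x·a = b is of the form x = (b/a)·e for some idempotent e ∈ S. -/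
/-!
In system (A) left multiplication is injective, `(y/y)·y = y`, and `(x/z)·z` acts on the right
exactly like `x`. The right product identity makes `((u\u)/y)·y` independent of `u`, which
yields that every `x\x` is idempotent and that `(c/e)·e = c·e` for every idempotent `e`. Hence,
when `a\a = b\b`, we get `(b/a)·a = b` and `((b/a)·e)·a = (((b/a)/e)·e)·a = (b/a)·a = b`;
conversely, if `x·a = b` then `b/a = (x/a)·a` acts like `x`, so `(b/a)·(x\x) = x·(x\x) = x`.
-/

structure SystemA_s16 {S : Type*} (mul ld rd : S → S → S) : Prop where
  ld_mul : ∀ x y, ld x (mul x y) = y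
  mul_ld : ∀ x y, mul x (ld x y) = y
  rd_mul_eq_mul_rd : ∀ x y, mul (rd x y) y = rd (mul x y) y
  rd_rd_mul : ∀ x y z, rd (mul (rd x y) y) z = rd x z
  rd_mul_mul : ∀ x y z, mul (rd (mul x y) z) z = mul x (mul (rd y z) z)

structure RightProductRightLoop {S : Type*} (mul ld rd : S → S → S) : Prop
    extends SystemA_s16 mul ld rd where
  ld_self_mul : ∀ x y z, mul (ld x x) z = mul (ld y y) z

namespace SystemA_s16

variable {S : Type*} {mul ld rd : S → S → S}

theorem mul_left_cancel_s16 (h : SystemA_s16 mul ld rd) {x u v : S} (huv : mul x u = mul x v) : u = v := by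
  rw [← h.ld_mul x u, huv, h.ld_mul]

theorem rd_self_mul (h : SystemA_s16 mul ld rd) (y : S) : mul (rd y y) y = y := by
  refine h.mul_left_cancel_s16 (x := rd y y) ?_
  have := h.rd_mul_mul (rd y y) y y
  rw [h.rd_rd_mul] at this
  exact this.symm

theorem rd_ld_self_mul (h : SystemA_s16 mul ld rd) (y : S) : mul (rd (ld y y) y) y = ld y y := by
  refine h.mul_left_cancel_s16 (x := y) ?_
  have := h.rd_mul_mul y (ld y y) y
  rw [h.mul_ld, h.rd_self_mul] at this
  rw [← this, h.mul_ld]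

theorem rd_mul_mul_self (h : SystemA_s16 mul ld rd) (x y : S) :
    mul (mul (rd x y) y) y = mul x y := by
  rw [h.rd_mul_eq_mul_rd, h.rd_mul_mul, h.rd_self_mul]

theorem rd_mul_mul_eq_mul (h : SystemA_s16 mul ld rd) (x z y : S) :
    mul (mul (rd x z) z) y = mul x y := by
  have := h.rd_mul_mul_self (mul (rd x z) z) y
  rw [h.rd_rd_mul, h.rd_mul_mul_self] at this
  exact this.symm

theorem ld_self_of_mul_self (h : SystemA_s16 mul ld rd) {e : S} (he : mul e e = e) : ld e e = e := by
  simpa only [he] using h.ld_mul e e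

theorem rd_mul_of_ld_self_eq (h : SystemA_s16 mul ld rd) {a b : S} (hab : ld a a = ld b b) :
    mul (rd b a) a = b := by
  have hb : mul b (ld a a) = b := by rw [hab, h.mul_ld]
  simpa only [hb, h.rd_ld_self_mul] using h.rd_mul_mul b (ld a a) a

end SystemA_s16

namespace RightProductRightLoop

variable {S : Type*} {mul ld rd : S → S → S}

theorem rd_ld_self_mul_eq_ld_self (h : RightProductRightLoop mul ld rd) (u y : S) :
    mul (rd (ld u u) y) y = ld y y := by
  rw [h.rd_mul_eq_mul_rd, h.ld_self_mul u y y, ← h.rd_mul_eq_mul_rd, h.rd_ld_self_mul]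

theorem ld_self_idempotent (h : RightProductRightLoop mul ld rd) (x : S) :
    mul (ld x x) (ld x x) = ld x x := by
  have hfix : ld (ld x x) (ld x x) = ld x x := by
    simpa only [h.rd_self_mul] using (h.rd_ld_self_mul_eq_ld_self x (ld x x)).symm
  simpa only [hfix] using h.mul_ld (ld x x) (ld x x)

theorem rd_mul_of_idempotent (h : RightProductRightLoop mul ld rd) (c : S) {e : S}
    (he : mul e e = e) : mul (rd c e) e = mul c e := by
  simpa only [h.mul_ld, h.rd_ld_self_mul_eq_ld_self, h.ld_self_of_mul_self he]
    using h.rd_mul_mul c (ld c c) e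

end RightProductRightLoop

/-- In an algebra satisfying system (A) together with
`(x\x)·z = (y\y)·z` (a right product right loop), if `a\a = b\b`, then for every
idempotent `e` the element `(b/a)·e` solves `x·a = b`, and conversely every solution
of `x·a = b` has the form `(b/a)·e` for some idempotent `e`. -/
theorem rightLoop_solutions_via_idempotents {S : Type*} (mul ld rd : S → S → S)
    (A1 : ∀ x y : S, ld x (mul x y) = y)
    (A2 : ∀ x y : S, mul x (ld x y) = y)
    (A3 : ∀ x y : S, mul (rd x y) y = rd (mul x y) y)
    (A4 : ∀ x y z : S, rd (mul (rd x y) y) z = rd x z)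
    (A5 : ∀ x y z : S, mul (rd (mul x y) z) z = mul x (mul (rd y z) z))
    (RL : ∀ x y z : S, mul (ld x x) z = mul (ld y y) z)
    (a b : S) (hab : ld a a = ld b b) :
    (∀ e : S, mul e e = e → mul (mul (rd b a) e) a = b) ∧
    (∀ x : S, mul x a = b → ∃ e : S, mul e e = e ∧ x = mul (rd b a) e) := by
  have h : RightProductRightLoop mul ld rd := ⟨⟨A1, A2, A3, A4, A5⟩, RL⟩
  constructor
  · intro e he
    rw [← h.rd_mul_of_idempotent (rd b a) he, h.rd_mul_mul_eq_mul,
      h.rd_mul_of_ld_self_eq hab]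
  · rintro x rfl
    refine ⟨ld x x, h.ld_self_idempotent x, ?_⟩
    rw [← h.rd_mul_eq_mul_rd, h.rd_mul_mul_eq_mul, h.mul_ld]
end

section
/- Let (S; ·, \, /) be an algebra satisfying system (A) together with the identity (x/x)·y = y (i.e., S is a right product left loop). Let a₁, …, aₙ (n ≥ 1) be elements of S, and let b₁, …, bₘ be the subsequence of a₁, …, a_{n−1} consisting of those entries that are NOT idempotent (aᵢ·aᵢ ≠ aᵢ). Then the right-associated product ϱ(a₁, …, aₙ) = a₁·(a₂·(⋯·(a_{n−1}·aₙ))) equals the right-associated product ϱ(b₁, …, bₘ, aₙ). -/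
/-! An idempotent `e` satisfies `(e/e)·e = (e·e)/e = e/e` by (A3), so `e/e = e` by the left-loop
law, and then `e·y = (e/e)·y = y`: idempotents are left identities and drop out of any
right-associated product. -/

/-- The right-associated product `ϱ(a₁, …, aₙ)` of the nonempty sequence
`a₁, …, a_{n-1}, aₙ` encoded as the list `[a₁, …, a_{n-1}]` together with the last
element `aₙ`: `rprod mul [] a = a` and `rprod mul (x :: l) a = x · rprod mul l a`. -/
def rprod {S : Type*} (mul : S → S → S) : List S → S → S
  | [], a => a
  | x :: l, a => mul x (rprod mul l a)

section LeftIdentity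

variable {S : Type*} {mul rd : S → S → S}

theorem rd_self_eq_of_mul_self (A3 : ∀ x y : S, mul (rd x y) y = rd (mul x y) y)
    (LL : ∀ x y : S, mul (rd x x) y = y) {e : S} (he : mul e e = e) : rd e e = e := by
  have h : mul (rd e e) e = rd e e := by rw [A3, he]
  rw [← h, LL]

theorem mul_eq_right_of_mul_self (A3 : ∀ x y : S, mul (rd x y) y = rd (mul x y) y)
    (LL : ∀ x y : S, mul (rd x x) y = y) {e : S} (he : mul e e = e) (y : S) : mul e y = y := by
  simpa only [rd_self_eq_of_mul_self A3 LL he] using LL e y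

end LeftIdentity

theorem rprod_filter_of_mul_eq_right {S : Type*} (mul : S → S → S) (p : S → Bool)
    (hp : ∀ x, p x = false → ∀ y, mul x y = y) (l : List S) (a : S) :
    rprod mul l a = rprod mul (l.filter p) a := by
  induction l with
  | nil => rfl
  | cons x l ih =>
    cases hx : p x
    · rw [List.filter_cons_of_neg (by simp [hx]), rprod, hp x hx, ih]
    · rw [List.filter_cons_of_pos hx, rprod, rprod, ih]

open scoped Classical in
theorem rprod_filter_idempotents_general {S : Type*} (mul rd : S → S → S)
    (A3 : ∀ x y : S, mul (rd x y) y = rd (mul x y) y)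
    (LL : ∀ x y : S, mul (rd x x) y = y)
    (l : List S) (a : S) :
    rprod mul l a = rprod mul (l.filter fun x => decide (mul x x ≠ x)) a :=
  rprod_filter_of_mul_eq_right mul _
    (fun x hx => mul_eq_right_of_mul_self A3 LL (by simpa using hx)) l a

open scoped Classical in
/-- In an algebra satisfying system (A) together with `(x/x)·y = y`
(a right product left loop), the right-associated product of `a₁, …, aₙ` equals the
right-associated product of the non-idempotent entries among `a₁, …, a_{n-1}`
followed by `aₙ`. -/
theorem rprod_filter_idempotents {S : Type*} (mul ld rd : S → S → S)
    (A1 : ∀ x y : S, ld x (mul x y) = y)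
    (A2 : ∀ x y : S, mul x (ld x y) = y)
    (A3 : ∀ x y : S, mul (rd x y) y = rd (mul x y) y)
    (A4 : ∀ x y z : S, rd (mul (rd x y) y) z = rd x z)
    (A5 : ∀ x y z : S, mul (rd (mul x y) z) z = mul x (mul (rd y z) z))
    (LL : ∀ x y : S, mul (rd x x) y = y)
    (l : List S) (a : S) :
    rprod mul l a = rprod mul (l.filter fun x => decide (mul x x ≠ x)) a :=
  rprod_filter_idempotents_general mul rd A3 LL l a
end

section
/- Axiom (A5) is independent of (A1)–(A4): there exists an algebra (S; ·, \, /) on a two-element set — for instance S = Bool with x·y = x \ y = x/y = ¬y (i.e., s∘0 = 1 and s∘1 = 0 for each of the three operations) — which satisfies (A1) x \ (x·y) = y, (A2) x·(x \ y) = y, (A3) (x/y)·y = (x·y)/y, and (A4) ((x/y)·y)/z = x/z for all x, y, z, but does not satisfy (A5): there exist x, y, z with ((x·y)/z)·z ≠ x·((y/z)·z). -/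
/-- The two-element model: all three operations are `(x, y) ↦ ¬y` on `Bool`. -/
def negOp : Bool → Bool → Bool := fun _ y => !y

theorem negOp_negOp (x y z : Bool) : negOp x (negOp y z) = z :=
  Bool.not_not z

/-- (A5) fails everywhere: its left side ends in `· z`, hence is `¬z`, while its right side
`x · (w · z)` collapses to `z`. -/
theorem negOp_not_A5 (x y z : Bool) :
    negOp (negOp (negOp x y) z) z ≠ negOp x (negOp (negOp y z) z) := by
  rw [negOp_negOp]
  exact Bool.not_ne_self z

/-- Axiom (A5) is independent of (A1)–(A4): the algebra on `Bool` whose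
three operations `·`, `\`, `/` are all `(x, y) ↦ ¬y` satisfies (A1)–(A4) but not (A5). -/
theorem A5_independent :
    (∀ x y : Bool, negOp x (negOp x y) = y) ∧
    (∀ x y : Bool, negOp x (negOp x y) = y) ∧
    (∀ x y : Bool, negOp (negOp x y) y = negOp (negOp x y) y) ∧
    (∀ x y z : Bool, negOp (negOp (negOp x y) y) z = negOp x z) ∧
    (∃ x y z : Bool, negOp (negOp (negOp x y) z) z ≠ negOp x (negOp (negOp y z) z)) :=
  ⟨fun x y => negOp_negOp x x y, fun x y => negOp_negOp x x y, fun _ _ => rfl,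
    fun _ _ _ => rfl, ⟨false, false, false, negOp_not_A5 false false false⟩⟩
end
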